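/- arXiv:2204.12856 — 7 statements merged into one kernel-verified Lean document; each statement's English description precedes it below -/
import Mathlib

section
/- Let C be a finite candidate set with p ∈ C, let s : C → ℤ be arbitrary (the First-Last scores of the candidates from the registered voters), and let W be a finite multiset of First-Last votes on C in which no vote has p as its first or last component. Let k ∈ ℕ, assume b_x := Σ_{a ∈ C∖{p}} (s(p) − s(a)) ≥ 0, and let M be an integer with M ≥ |W| + |s(p) − s(a)| for every a ∈ C∖{p}. Define a loopless multigraph H: its vertices are two copies a and a′ of each candidate a ∈ C∖{p}, together with one further vertex x; for each vote (b, a) in W there is one red edge with endpoints a and b′; in addition, for every a ∈ C∖{p} there are M parallel nonred edges with endpoints a and a′ and M parallel nonred edges with endpoints x and a′. Set capacities b(a′) = M and b(a) = M + s(a) − s(p) for every a ∈ C∖{p}, and b(x) = b_x. Then there exists a submultiset W′ of W with |W′| = k such that for every a ∈ C∖{p} one has s(a) + #{votes in W′ with first component a} − #{votes in W′ with last component a} ≤ s(p) (i.e., adding exactly the k votes of W′ makes p a First-Last winner), if and only if H has a perfect b-matching containing exactly k red edges. -/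
/-- Vertex set of the multigraph `H`: an unprimed copy `a` and a primed copy `a′` of each
candidate `a ≠ p`, together with one further vertex `x`. -/
abbrev FLVert (C : Type) (p : C) : Type := ({a : C // a ≠ p} ⊕ {a : C // a ≠ p}) ⊕ Unit

/-- Edge-index set of `H`: one red edge for each vote in `W`, and for each candidate
`a ≠ p`, `M` parallel nonred edges `a–a′` and `M` parallel nonred edges `x–a′`. -/
abbrev FLEdge (C : Type) [DecidableEq C] (p : C)
    (W : Multiset ({a : C // a ≠ p} × {a : C // a ≠ p})) (M : ℕ) : Type :=
  Fin W.toList.length ⊕ (({a : C // a ≠ p} × Fin M) ⊕ ({a : C // a ≠ p} × Fin M))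

/-- Endpoints of the edges of `H`: the red edge of a vote `(b, a)` joins the unprimed
copy of `a` to the primed copy of `b`; the nonred edges join `a` to `a′` and `x` to `a′`. -/
noncomputable def flEnds (C : Type) [DecidableEq C] (p : C)
    (W : Multiset ({a : C // a ≠ p} × {a : C // a ≠ p})) (M : ℕ) :
    FLEdge C p W M → Sym2 (FLVert C p)
  | Sum.inl i =>
      s(Sum.inl (Sum.inl (W.toList.get i).2), Sum.inl (Sum.inr (W.toList.get i).1))
  | Sum.inr (Sum.inl (a, _)) => s(Sum.inl (Sum.inl a), Sum.inl (Sum.inr a))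
  | Sum.inr (Sum.inr (a, _)) => s(Sum.inr (), Sum.inl (Sum.inr a))

/-- Capacities: `b(a) = M + s(a) − s(p)`, `b(a′) = M`, and
`b(x) = Σ_{a ≠ p} (s(p) − s(a))`. -/
def flBval (C : Type) [Fintype C] [DecidableEq C] (p : C) (s : C → ℤ) (M : ℕ) :
    FLVert C p → ℕ
  | Sum.inl (Sum.inl a) => ((M : ℤ) + s a.1 - s p).toNat
  | Sum.inl (Sum.inr _) => M
  | Sum.inr _ => (∑ a ∈ Finset.univ.erase p, (s p - s a)).toNat

lemma cardFilterSum {α β : Type*} (S : Finset (α ⊕ β)) (P : α ⊕ β → Prop) [DecidablePred P] :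
    (S.filter P).card
      = (S.toLeft.filter fun a => P (Sum.inl a)).card
        + (S.toRight.filter fun b => P (Sum.inr b)).card := by
  have h1 : (S.filter P).toLeft = S.toLeft.filter (fun a => P (Sum.inl a)) := by
    ext a; simp
  have h2 : (S.filter P).toRight = S.toRight.filter (fun b => P (Sum.inr b)) := by
    ext b; simp
  rw [← Finset.card_toLeft_add_card_toRight (u := S.filter P), h1, h2]

lemma univValMapGet {γ : Type*} (l : List γ) :
    ((Finset.univ : Finset (Fin l.length)).val.map l.get : Multiset γ) = ↑l := by
  have h : (Finset.univ : Finset (Fin l.length)).val = ↑(List.finRange l.length) := by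
    rw [Fin.univ_def]
  rw [h, Multiset.map_coe, List.map_get_finRange]

lemma finsetMapLe {γ : Type*} (l : List γ) (I : Finset (Fin l.length)) :
    I.val.map l.get ≤ (↑l : Multiset γ) := by
  rw [← univValMapGet l]
  exact Multiset.map_le_map (Finset.val_le_iff.mpr (Finset.subset_univ I))

lemma existsIndex {γ : Type*} (l : List γ) (m : Multiset γ) (h : m ≤ ↑l) :
    ∃ I : Finset (Fin l.length), I.val.map l.get = m := by
  rw [← Multiset.coe_toList m, Multiset.coe_le] at h
  obtain ⟨l₂, hp, hs⟩ := h
  rw [List.sublist_iff_exists_fin_orderEmbedding_get_eq] at hs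
  obtain ⟨f, hf⟩ := hs
  refine ⟨Finset.univ.map f.toEmbedding, ?_⟩
  rw [Finset.map_val, Multiset.map_map]
  have h2 : (l.get ∘ f.toEmbedding) = l₂.get := funext fun i => (hf i).symm
  rw [h2, univValMapGet l₂, Multiset.coe_eq_coe.mpr hp, Multiset.coe_toList]

lemma cardFinLt {M t : ℕ} (h : t ≤ M) :
    (Finset.univ.filter fun j : Fin M => (j : ℕ) < t).card = t := by
  have he : (Finset.univ.filter fun j : Fin M => (j : ℕ) < t)
      = (Finset.range t).attachFin (fun m hm => lt_of_lt_of_le (Finset.mem_range.mp hm) h) := by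
    ext j; simp [Finset.mem_attachFin]
  rw [he, Finset.card_attachFin, Finset.card_range]

lemma prodFilterCard {A : Type*} [Fintype A] [DecidableEq A] {M : ℕ} (t : A → ℕ) (a : A)
    (h : t a ≤ M) :
    ((Finset.univ.filter fun q : A × Fin M => (q.2 : ℕ) < t q.1).filter
      fun q => q.1 = a).card = t a := by
  rw [Finset.filter_filter]
  have he : (Finset.univ.filter fun q : A × Fin M => (q.2 : ℕ) < t q.1 ∧ q.1 = a)
      = {a} ×ˢ (Finset.univ.filter fun j : Fin M => (j : ℕ) < t a) := by
    ext ⟨b, j⟩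
    simp only [Finset.mem_filter, Finset.mem_univ, true_and, Finset.mem_product,
      Finset.mem_singleton]
    constructor
    · rintro ⟨h1, rfl⟩; exact ⟨rfl, h1⟩
    · rintro ⟨rfl, h1⟩; exact ⟨h1, rfl⟩
  rw [he, Finset.card_product, Finset.card_singleton, one_mul, cardFinLt h]

lemma prodCardTotal {A : Type*} [Fintype A] [DecidableEq A] {M : ℕ} (t : A → ℕ)
    (h : ∀ a, t a ≤ M) :
    (Finset.univ.filter fun q : A × Fin M => (q.2 : ℕ) < t q.1).card = ∑ a, t a := by
  rw [Finset.card_eq_sum_card_fiberwise (f := Prod.fst) (t := Finset.univ)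
    (fun x _ => Finset.mem_univ x.1)]
  exact Finset.sum_congr rfl fun a _ => prodFilterCard t a (h a)

lemma sumErase {C : Type} [Fintype C] [DecidableEq C] (p : C) (g : C → ℤ) :
    ∑ a ∈ Finset.univ.erase p, g a = ∑ a : {a : C // a ≠ p}, g a.1 :=
  Finset.sum_subtype _ (fun x => by simp) g

section counts
variable {C : Type} [DecidableEq C] {p : C}
  {W : Multiset ({a : C // a ≠ p} × {a : C // a ≠ p})} {M : ℕ}

lemma countRed (S : Finset (FLEdge C p W M)) :
    (S.filter fun e => e.isLeft).card = S.toLeft.card := by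
  rw [cardFilterSum]
  simp

lemma countA (S : Finset (FLEdge C p W M)) (a : {a : C // a ≠ p}) :
    (S.filter fun e => (Sum.inl (Sum.inl a) : FLVert C p) ∈ flEnds C p W M e).card
    = (S.toLeft.filter fun i => (W.toList.get i).2 = a).card
      + (S.toRight.toLeft.filter fun q => q.1 = a).card := by
  rw [cardFilterSum, cardFilterSum]
  have h1 : S.toLeft.filter (fun i =>
        (Sum.inl (Sum.inl a) : FLVert C p) ∈ flEnds C p W M (Sum.inl i))
      = S.toLeft.filter fun i => (W.toList.get i).2 = a :=
    Finset.filter_congr fun i _ => by simp [flEnds, eq_comm]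
  have h2 : S.toRight.toLeft.filter (fun q =>
        (Sum.inl (Sum.inl a) : FLVert C p) ∈ flEnds C p W M (Sum.inr (Sum.inl q)))
      = S.toRight.toLeft.filter fun q => q.1 = a :=
    Finset.filter_congr fun q _ => by obtain ⟨b, j⟩ := q; simp [flEnds, eq_comm]
  have h3 : S.toRight.toRight.filter (fun q =>
        (Sum.inl (Sum.inl a) : FLVert C p) ∈ flEnds C p W M (Sum.inr (Sum.inr q))) = ∅ := by
    rw [Finset.filter_eq_empty_iff]
    intro q _; obtain ⟨b, j⟩ := q; simp [flEnds]
  rw [h1, h2, h3]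
  simp

lemma countA' (S : Finset (FLEdge C p W M)) (a : {a : C // a ≠ p}) :
    (S.filter fun e => (Sum.inl (Sum.inr a) : FLVert C p) ∈ flEnds C p W M e).card
    = (S.toLeft.filter fun i => (W.toList.get i).1 = a).card
      + ((S.toRight.toLeft.filter fun q => q.1 = a).card
        + (S.toRight.toRight.filter fun q => q.1 = a).card) := by
  rw [cardFilterSum, cardFilterSum]
  have h1 : S.toLeft.filter (fun i =>
        (Sum.inl (Sum.inr a) : FLVert C p) ∈ flEnds C p W M (Sum.inl i))
      = S.toLeft.filter fun i => (W.toList.get i).1 = a :=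
    Finset.filter_congr fun i _ => by simp [flEnds, eq_comm]
  have h2 : S.toRight.toLeft.filter (fun q =>
        (Sum.inl (Sum.inr a) : FLVert C p) ∈ flEnds C p W M (Sum.inr (Sum.inl q)))
      = S.toRight.toLeft.filter fun q => q.1 = a :=
    Finset.filter_congr fun q _ => by obtain ⟨b, j⟩ := q; simp [flEnds, eq_comm]
  have h3 : S.toRight.toRight.filter (fun q =>
        (Sum.inl (Sum.inr a) : FLVert C p) ∈ flEnds C p W M (Sum.inr (Sum.inr q)))
      = S.toRight.toRight.filter fun q => q.1 = a :=
    Finset.filter_congr fun q _ => by obtain ⟨b, j⟩ := q; simp [flEnds, eq_comm]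
  rw [h1, h2, h3]

lemma countX (S : Finset (FLEdge C p W M)) :
    (S.filter fun e => (Sum.inr () : FLVert C p) ∈ flEnds C p W M e).card
      = S.toRight.toRight.card := by
  rw [cardFilterSum, cardFilterSum]
  have h1 : S.toLeft.filter (fun i =>
        (Sum.inr () : FLVert C p) ∈ flEnds C p W M (Sum.inl i)) = ∅ := by
    rw [Finset.filter_eq_empty_iff]; intro i _; simp [flEnds]
  have h2 : S.toRight.toLeft.filter (fun q =>
        (Sum.inr () : FLVert C p) ∈ flEnds C p W M (Sum.inr (Sum.inl q))) = ∅ := by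
    rw [Finset.filter_eq_empty_iff]; intro q _; obtain ⟨b, j⟩ := q; simp [flEnds]
  have h3 : S.toRight.toRight.filter (fun q =>
        (Sum.inr () : FLVert C p) ∈ flEnds C p W M (Sum.inr (Sum.inr q)))
      = S.toRight.toRight := by
    rw [Finset.filter_eq_self]; intro q _; obtain ⟨b, j⟩ := q; simp [flEnds]
  rw [h1, h2, h3]
  simp

lemma multisetFilterRel (J : Finset (Fin W.toList.length))
    (P : ({a : C // a ≠ p} × {a : C // a ≠ p}) → Prop) [DecidablePred P] :
    Multiset.card ((J.val.map W.toList.get).filter P)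
      = (J.filter fun i => P (W.toList.get i)).card := by
  rw [Multiset.filter_map]
  rw [Multiset.card_map]
  rfl

end counts

/-- exactly `k` votes of `W` (none of which involve `p`) can be added so that
every candidate `a ≠ p` ends with score at most that of `p` (i.e. `p` becomes a First-Last
winner), iff the multigraph `H` has a perfect `b`-matching with exactly `k` red edges. -/
theorem stmt0 {C : Type} [Fintype C] [DecidableEq C] (p : C) (s : C → ℤ)
    (W : Multiset ({a : C // a ≠ p} × {a : C // a ≠ p}))
    (hWd : ∀ v ∈ W, v.1 ≠ v.2)
    (k : ℕ) (M : ℕ)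
    (hbx : 0 ≤ ∑ a ∈ Finset.univ.erase p, (s p - s a))
    (hM : ∀ a : C, a ≠ p → (Multiset.card W : ℤ) + |s p - s a| ≤ (M : ℤ)) :
    (∃ W' ≤ W, Multiset.card W' = k ∧ ∀ a : C, a ≠ p →
        s a + ((Multiset.card (W'.filter (fun v => v.1.1 = a))) : ℤ)
            - ((Multiset.card (W'.filter (fun v => v.2.1 = a))) : ℤ) ≤ s p)
    ↔ ∃ S : Finset (FLEdge C p W M),
        (∀ v : FLVert C p,
            (S.filter (fun e => v ∈ flEnds C p W M e)).card = flBval C p s M v) ∧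
        (S.filter (fun e => e.isLeft)).card = k := by
  have hbridge1 : ∀ (J : Finset (Fin W.toList.length)) (a : {x : C // x ≠ p}),
      Multiset.card ((J.val.map W.toList.get).filter (fun v => v.1.1 = a.1))
        = (J.filter fun i => (W.toList.get i).1 = a).card := by
    intro J a
    rw [multisetFilterRel]
    exact congrArg Finset.card (Finset.filter_congr fun i _ =>
      ⟨fun h => Subtype.ext h, fun h => congrArg Subtype.val h⟩)
  have hbridge2 : ∀ (J : Finset (Fin W.toList.length)) (a : {x : C // x ≠ p}),
      Multiset.card ((J.val.map W.toList.get).filter (fun v => v.2.1 = a.1))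
        = (J.filter fun i => (W.toList.get i).2 = a).card := by
    intro J a
    rw [multisetFilterRel]
    exact congrArg Finset.card (Finset.filter_congr fun i _ =>
      ⟨fun h => Subtype.ext h, fun h => congrArg Subtype.val h⟩)
  constructor
  · rintro ⟨W', hle, hcard, hcond⟩
    obtain ⟨I, hI⟩ := existsIndex W.toList W' (by rwa [Multiset.coe_toList])
    have hIcard : I.card = k := by
      have h0 := congrArg Multiset.card hI
      rw [Multiset.card_map, hcard] at h0
      exact h0
    set la : {x : C // x ≠ p} → ℕ :=
      fun a => (I.filter fun i => (W.toList.get i).2 = a).card with hla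
    set fa : {x : C // x ≠ p} → ℕ :=
      fun a => (I.filter fun i => (W.toList.get i).1 = a).card with hfa
    have hcond' : ∀ a : {x : C // x ≠ p}, s a.1 + (fa a : ℤ) - (la a : ℤ) ≤ s p := by
      intro a
      have h0 := hcond a.1 a.2
      rw [← hI, hbridge1 I a, hbridge2 I a] at h0
      exact h0
    have hcW : ∀ a : {x : C // x ≠ p}, la a ≤ Multiset.card W ∧ fa a ≤ Multiset.card W := by
      intro a
      have hc : I.card ≤ Multiset.card W := by
        have h0 := Finset.card_le_univ I
        rw [Fintype.card_fin] at h0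
        exact le_trans h0 (le_of_eq (Multiset.length_toList W))
      exact ⟨le_trans (Finset.card_filter_le _ _) hc, le_trans (Finset.card_filter_le _ _) hc⟩
    have habs : ∀ a : {x : C // x ≠ p},
        s p - s a.1 ≤ |s p - s a.1| ∧ -(s p - s a.1) ≤ |s p - s a.1| :=
      fun a => ⟨le_abs_self _, neg_le_abs _⟩
    set m : {x : C // x ≠ p} → ℕ :=
      fun a => ((M : ℤ) + s a.1 - s p - la a).toNat with hm
    set nn : {x : C // x ≠ p} → ℕ :=
      fun a => (s p - s a.1 + la a - fa a).toNat with hnn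
    have hmd : ∀ a, m a = ((M : ℤ) + s a.1 - s p - la a).toNat := fun a => rfl
    have hnnd : ∀ a, nn a = (s p - s a.1 + la a - fa a).toNat := fun a => rfl
    have hmM : ∀ a, m a ≤ M := by
      intro a
      have h1 := hcond' a
      have h2 := (hcW a).1
      have h4 := hM a.1 a.2
      have h5 := habs a
      rw [hmd a]; omega
    have hnnM : ∀ a, nn a ≤ M := by
      intro a
      have h1 := hcond' a
      have h2 := (hcW a).1
      have h3 := (hcW a).2
      have h4 := hM a.1 a.2
      have h5 := habs a
      rw [hnnd a]; omega
    set U1 : Finset ({x : C // x ≠ p} × Fin M) :=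
      Finset.univ.filter (fun q => (q.2 : ℕ) < m q.1) with hU1
    set U2 : Finset ({x : C // x ≠ p} × Fin M) :=
      Finset.univ.filter (fun q => (q.2 : ℕ) < nn q.1) with hU2
    refine ⟨(I.map ⟨Sum.inl, Sum.inl_injective⟩)
        ∪ (U1.map ⟨fun q => Sum.inr (Sum.inl q), fun x y h => by simpa using h⟩)
        ∪ (U2.map ⟨fun q => Sum.inr (Sum.inr q), fun x y h => by simpa using h⟩), ?_, ?_⟩
    · set S : Finset (FLEdge C p W M) := (I.map ⟨Sum.inl, Sum.inl_injective⟩)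
        ∪ (U1.map ⟨fun q => Sum.inr (Sum.inl q), fun x y h => by simpa using h⟩)
        ∪ (U2.map ⟨fun q => Sum.inr (Sum.inr q), fun x y h => by simpa using h⟩) with hS
      have hTL : S.toLeft = I := by
        ext i; simp [hS]
      have hT1 : S.toRight.toLeft = U1 := by
        ext q; simp [hS, DFunLike.coe]
      have hT2 : S.toRight.toRight = U2 := by
        ext q; simp [hS, DFunLike.coe]
      intro v
      rcases v with (a | a) | u
      · rw [countA, hTL, hT1, hU1, prodFilterCard m a (hmM a)]
        simp only [flBval]
        have h1 : (I.filter fun i => (W.toList.get i).2 = a).card = la a := rfl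
        have h2 := (hcW a).1
        have h4 := hM a.1 a.2
        have h5 := habs a
        rw [h1, hmd a]
        omega
      · rw [countA', hTL, hT1, hT2, hU1, hU2, prodFilterCard m a (hmM a),
          prodFilterCard nn a (hnnM a)]
        simp only [flBval]
        have h1 : (I.filter fun i => (W.toList.get i).1 = a).card = fa a := rfl
        have hc := hcond' a
        have h2 := (hcW a).1
        have h3 := (hcW a).2
        have h4 := hM a.1 a.2
        have h5 := habs a
        rw [h1, hmd a, hnnd a]
        omega
      · rw [countX, hT2, hU2, prodCardTotal nn hnnM]
        simp only [flBval]
        have hlasum : ∑ a : {x : C // x ≠ p}, la a = I.card :=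
          (Finset.card_eq_sum_card_fiberwise (f := fun i => (W.toList.get i).2)
            (t := Finset.univ) (fun x _ => Finset.mem_univ _)).symm
        have hfasum : ∑ a : {x : C // x ≠ p}, fa a = I.card :=
          (Finset.card_eq_sum_card_fiberwise (f := fun i => (W.toList.get i).1)
            (t := Finset.univ) (fun x _ => Finset.mem_univ _)).symm
        have hfin : ((∑ a : {x : C // x ≠ p}, nn a : ℕ) : ℤ)
            = ∑ a ∈ Finset.univ.erase p, (s p - s a) := by
          rw [Nat.cast_sum]
          have hstep : ∀ a ∈ (Finset.univ : Finset {x : C // x ≠ p}),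
              ((nn a : ℕ) : ℤ) = s p - s a.1 + (la a : ℤ) - (fa a : ℤ) := by
            intro a _
            rw [hnnd a]
            refine Int.toNat_of_nonneg ?_
            have hc := hcond' a
            omega
          rw [Finset.sum_congr rfl hstep, Finset.sum_sub_distrib, Finset.sum_add_distrib]
          have hlc : ∑ a : {x : C // x ≠ p}, (la a : ℤ) = (k : ℤ) := by
            rw [← Nat.cast_sum, hlasum, hIcard]
          have hfc : ∑ a : {x : C // x ≠ p}, (fa a : ℤ) = (k : ℤ) := by
            rw [← Nat.cast_sum, hfasum, hIcard]
          rw [hlc, hfc, sumErase p (fun a => s p - s a)]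
          ring
        omega
    · rw [countRed]
      have hTL : ((I.map ⟨Sum.inl, Sum.inl_injective⟩)
          ∪ (U1.map ⟨fun q => Sum.inr (Sum.inl q), fun x y h => by simpa using h⟩)
          ∪ (U2.map ⟨fun q => Sum.inr (Sum.inr q), fun x y h => by simpa using h⟩)
            : Finset (FLEdge C p W M)).toLeft = I := by
        ext i; simp
      rw [hTL]
      exact hIcard
  · rintro ⟨S, hdeg, hred⟩
    refine ⟨S.toLeft.val.map W.toList.get,
        le_of_le_of_eq (finsetMapLe _ _) (Multiset.coe_toList W), ?_, ?_⟩
    · rw [Multiset.card_map]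
      show S.toLeft.card = k
      rw [← countRed]
      exact hred
    · intro a ha
      have h1 := hdeg (Sum.inl (Sum.inl ⟨a, ha⟩))
      rw [countA] at h1
      simp only [flBval] at h1
      have h2 := hdeg (Sum.inl (Sum.inr ⟨a, ha⟩))
      rw [countA'] at h2
      simp only [flBval] at h2
      rw [hbridge1 S.toLeft ⟨a, ha⟩, hbridge2 S.toLeft ⟨a, ha⟩]
      have h4 := hM a ha
      have h5 : s p - s a ≤ |s p - s a| := le_abs_self _
      have h6 : -(s p - s a) ≤ |s p - s a| := neg_le_abs _
      omega
end

section
/- Let C be a finite candidate set with p ∈ C, let X and Y be finite multisets of 2-Approval votes on C (the registered and unregistered voters), and let ℓ ∈ ℕ with ℓ ≤ |X| and ℓ ≤ |Y|. Set k = |X| − ℓ and s_p = min(k, #{votes in X containing p}) + min(ℓ, #{votes in Y containing p}), and assume |C|·s_p − 2|X| ≥ 0. Define a loopless multigraph H with vertex set C ∪ {x}, where x is a new vertex: for each vote {a, b} in X one red edge with endpoints a and b; for each vote {a, b} in Y one blue edge with endpoints a and b; and for each c ∈ C∖{p}, s_p parallel uncolored edges with endpoints c and x. Set capacities b(c) =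 s_p for every c ∈ C and b(x) = |C|·s_p − 2|X|. Then there exist submultisets X′ of X and Y′ of Y with |X′| = k and |Y′| = ℓ such that p is a 2-Approval winner of the multiset X′ + Y′, if and only if H has a perfect b-matching containing exactly k red edges and exactly ℓ blue edges. -/
/-- The 2-Approval score of candidate `c`: the number of votes containing `c`. -/
def apScore {C : Type} [DecidableEq C] (V : Multiset (Sym2 C)) (c : C) : ℕ :=
  Multiset.card (V.filter (fun v => c ∈ v))

/-- `c` is a 2-Approval winner of `V` if its score is at least that of every candidate. -/
def apWinner {C : Type} [Fintype C] [DecidableEq C] (V : Multiset (Sym2 C)) (c : C) : Prop :=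
  ∀ d : C, apScore V d ≤ apScore V c

/-- The fixed final score of `p`:
`s_p = min(k, #{votes in X containing p}) + min(ℓ, #{votes in Y containing p})`,
where `k = |X| − ℓ`. -/
def spVal {C : Type} [DecidableEq C] (p : C) (X Y : Multiset (Sym2 C)) (ℓ : ℕ) : ℕ :=
  min (Multiset.card X - ℓ) (apScore X p) + min ℓ (apScore Y p)

/-- Edge-index set of `H`: one red edge per vote in `X`, one blue edge per vote in `Y`,
and for each candidate `c ≠ p`, `s_p` parallel uncolored edges `c–x`. -/
abbrev TAEdge (C : Type) [DecidableEq C] (p : C) (X Y : Multiset (Sym2 C)) (ℓ : ℕ) : Type :=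
  Fin X.toList.length ⊕ (Fin Y.toList.length ⊕ ({c : C // c ≠ p} × Fin (spVal p X Y ℓ)))

/-- Endpoints of the edges of `H` (vertex set `C ⊕ Unit`, where `Sum.inr ()` is the
auxiliary vertex `x`): a colored edge of a vote `{a, b}` has endpoints `a` and `b`;
the uncolored edges join `c` to `x`. -/
noncomputable def taEnds (C : Type) [DecidableEq C] (p : C) (X Y : Multiset (Sym2 C))
    (ℓ : ℕ) : TAEdge C p X Y ℓ → Sym2 (C ⊕ Unit)
  | Sum.inl i => (X.toList.get i).map Sum.inl
  | Sum.inr (Sum.inl j) => (Y.toList.get j).map Sum.inl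
  | Sum.inr (Sum.inr (c, _)) => s(Sum.inl c.1, Sum.inr ())

/-- Capacities: `b(c) = s_p` for every candidate `c`, and `b(x) = |C|·s_p − 2|X|`. -/
def taBval (C : Type) [Fintype C] [DecidableEq C] (p : C) (X Y : Multiset (Sym2 C))
    (ℓ : ℕ) : C ⊕ Unit → ℕ
  | Sum.inl _ => spVal p X Y ℓ
  | Sum.inr _ => Fintype.card C * spVal p X Y ℓ - 2 * Multiset.card X

/-! ### Auxiliary lemmas -/

open Finset

section Aux

variable {C : Type} [DecidableEq C]

lemma apScore_add (A B : Multiset (Sym2 C)) (c : C) :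
    apScore (A + B) c = apScore A c + apScore B c := by
  simp [apScore, Multiset.filter_add]

lemma apScore_mono {A B : Multiset (Sym2 C)} (h : A ≤ B) (c : C) :
    apScore A c ≤ apScore B c :=
  Multiset.card_le_card (Multiset.filter_le_filter _ h)

lemma apScore_le_card (A : Multiset (Sym2 C)) (c : C) :
    apScore A c ≤ Multiset.card A :=
  Multiset.card_le_card (Multiset.filter_le _ _)

lemma apScore_cons (v : Sym2 C) (A : Multiset (Sym2 C)) (c : C) :
    apScore (v ::ₘ A) c = (if c ∈ v then 1 else 0) + apScore A c := by
  simp only [apScore, Multiset.filter_cons]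
  split <;> simp [Nat.add_comm]

lemma card_mem_filter [Fintype C] {v : Sym2 C} (hv : ¬ v.IsDiag) :
    (Finset.univ.filter (fun c => c ∈ v)).card = 2 := by
  induction v with
  | _ a b =>
    rw [Sym2.mk_isDiag_iff] at hv
    have h : Finset.univ.filter (fun c => c ∈ s(a,b)) = {a, b} := by
      ext c; simp [Sym2.mem_iff]
    rw [h, Finset.card_insert_of_notMem (by simp [hv]), Finset.card_singleton]

lemma sum_apScore [Fintype C] (V : Multiset (Sym2 C)) (hV : ∀ v ∈ V, ¬ v.IsDiag) :
    ∑ c : C, apScore V c = 2 * Multiset.card V := by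
  induction V using Multiset.induction with
  | empty => simp [apScore]
  | cons v V ih =>
    have hv := hV v (Multiset.mem_cons_self _ _)
    rw [Finset.sum_congr rfl (fun c _ => apScore_cons v V c), Finset.sum_add_distrib,
      ih (fun w hw => hV w (Multiset.mem_cons_of_mem hw)), ← Finset.card_filter,
      card_mem_filter hv]
    simp [Multiset.card_cons, Nat.mul_add, Nat.add_comm]

lemma exchange [Fintype C] (p : C) (X W : Multiset (Sym2 C)) (k : ℕ) :
    ∀ d : ℕ, ∀ X' : Multiset (Sym2 C), X' ≤ X → Multiset.card X' = k →
      apWinner (X' + W) p → min k (apScore X p) - apScore X' p ≤ d →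
      ∃ X'' ≤ X, Multiset.card X'' = k ∧ apWinner (X'' + W) p ∧
        apScore X'' p = min k (apScore X p) := by
  intro d
  induction d with
  | zero =>
    intro X' hle hcard hwin hd
    exact ⟨X', hle, hcard, hwin,
      le_antisymm (le_min (hcard ▸ apScore_le_card X' p) (apScore_mono hle p)) (by omega)⟩
  | succ d ih =>
    intro X' hle hcard hwin hd
    by_cases heq : min k (apScore X p) ≤ apScore X' p
    · exact ⟨X', hle, hcard, hwin,
        le_antisymm (le_min (hcard ▸ apScore_le_card X' p) (apScore_mono hle p)) heq⟩
    push_neg at heq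
    have h1 : apScore X' p < apScore X p := lt_of_lt_of_le heq (min_le_right _ _)
    have h2 : apScore X' p < k := lt_of_lt_of_le heq (min_le_left _ _)
    have hXX' : X' + (X - X') = X := add_tsub_cancel_of_le hle
    have hv' : 0 < Multiset.card ((X - X').filter (fun v => p ∈ v)) := by
      have h4 := apScore_add X' (X - X') p
      rw [hXX'] at h4
      have h5 : 0 < apScore (X - X') p := by omega
      simpa [apScore] using h5
    obtain ⟨v, hvmem⟩ := Multiset.card_pos_iff_exists_mem.1 hv'
    obtain ⟨hvX, hpv⟩ := Multiset.mem_filter.1 hvmem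
    have hw' : 0 < Multiset.card (X'.filter (fun w => ¬ p ∈ w)) := by
      have hsplit := congrArg Multiset.card (Multiset.filter_add_not (fun w => p ∈ w) X')
      rw [Multiset.card_add] at hsplit
      unfold apScore at h2
      omega
    obtain ⟨w, hwmem⟩ := Multiset.card_pos_iff_exists_mem.1 hw'
    obtain ⟨hwX', hpw⟩ := Multiset.mem_filter.1 hwmem
    have hvw : v ≠ w := fun h => hpw (h ▸ hpv)
    set X'' := v ::ₘ X'.erase w with hX''def
    have hX''le : X'' ≤ X := by
      rw [Multiset.le_iff_count]
      intro u
      rw [hX''def, Multiset.count_cons]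
      rcases eq_or_ne u v with rfl | hne
      · rw [Multiset.count_erase_of_ne hvw]
        have : 0 < Multiset.count u (X - X') := Multiset.count_pos.2 hvX
        rw [Multiset.count_sub] at this
        have := Multiset.count_le_of_le u hle
        simp only [reduceIte]
        omega
      · simp only [if_neg hne, add_zero]
        exact le_trans (Multiset.count_le_of_le u (Multiset.erase_le w X'))
          (Multiset.count_le_of_le u hle)
    have hX''card : Multiset.card X'' = k := by
      rw [hX''def, Multiset.card_cons, Multiset.card_erase_of_mem hwX', hcard,
        Nat.pred_eq_sub_one]
      omega
    have hX'eq : X' = w ::ₘ X'.erase w := (Multiset.cons_erase hwX').symm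
    have hscore'' : apScore X'' p = apScore X' p + 1 := by
      rw [hX''def, apScore_cons, if_pos hpv]
      conv_rhs => rw [hX'eq, apScore_cons, if_neg hpw]
      omega
    have hle'' : ∀ c, apScore X'' c ≤ apScore X' c + 1 := by
      intro c
      rw [hX''def, apScore_cons]
      conv_rhs => rw [hX'eq, apScore_cons]
      have := apScore_mono (Multiset.erase_le w X') c
      split <;> split <;> omega
    have hwin'' : apWinner (X'' + W) p := by
      intro c
      rw [apScore_add, apScore_add, hscore'']
      calc apScore X'' c + apScore W c ≤ apScore X' c + 1 + apScore W c := by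
            have := hle'' c; omega
        _ ≤ apScore X' p + apScore W p + 1 := by
            have := hwin c; rw [apScore_add, apScore_add] at this; omega
        _ = apScore X' p + 1 + apScore W p := by omega
    exact ih X'' hX''le hX''card hwin'' (by omega)

lemma card_filter_sum3 {α β γ : Type*} [Fintype α] [Fintype β] [Fintype γ]
    [DecidableEq α] [DecidableEq β] [DecidableEq γ]
    (S : Finset (α ⊕ (β ⊕ γ))) (q : α ⊕ (β ⊕ γ) → Prop) [DecidablePred q] :
    (S.filter q).card
      = (univ.filter fun a => Sum.inl a ∈ S ∧ q (Sum.inl a)).card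
      + (univ.filter fun b => Sum.inr (Sum.inl b) ∈ S ∧ q (Sum.inr (Sum.inl b))).card
      + (univ.filter fun c => Sum.inr (Sum.inr c) ∈ S ∧ q (Sum.inr (Sum.inr c))).card := by
  have h : S.filter q = univ.filter (fun e => e ∈ S ∧ q e) := by
    ext e; simp [Finset.mem_filter]
  rw [h]
  simp only [Finset.card_filter]
  rw [Fintype.sum_sum_type, Fintype.sum_sum_type, add_assoc]

lemma card_filter_fin_lt (s t : ℕ) (h : t ≤ s) :
    (univ.filter fun j : Fin s => (j : ℕ) < t).card = t := by
  rw [Finset.card_filter, Fin.sum_univ_eq_sum_range (fun j => if j < t then 1 else 0) s,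
    ← Finset.card_filter]
  have : (Finset.range s).filter (fun j => j < t) = Finset.range t := by
    ext j; simp; omega
  rw [this, Finset.card_range]

lemma card_filter_prod {A : Type*} [Fintype A] [DecidableEq A] (s : ℕ) (t : A → ℕ)
    (ht : ∀ a, t a ≤ s) :
    (univ.filter fun u : A × Fin s => (u.2 : ℕ) < t u.1).card = ∑ a : A, t a := by
  rw [Finset.card_filter, Fintype.sum_prod_type]
  refine Finset.sum_congr rfl fun a _ => ?_
  rw [← Finset.card_filter, card_filter_fin_lt s (t a) (ht a)]

lemma card_filter_prod_eq {A : Type*} [Fintype A] [DecidableEq A] (s : ℕ) (t : A → ℕ)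
    (ht : ∀ a, t a ≤ s) (a0 : A) :
    (univ.filter fun u : A × Fin s => (u.2 : ℕ) < t u.1 ∧ u.1 = a0).card = t a0 := by
  rw [Finset.card_filter, Fintype.sum_prod_type]
  rw [Finset.sum_eq_single a0 (fun b _ hb => by simp [hb]) (by simp)]
  simp only [and_true]
  rw [← Finset.card_filter, card_filter_fin_lt s (t a0) (ht a0)]

lemma indexed_le {α : Type*} (l : List α) (R : Finset (Fin l.length)) :
    Multiset.map l.get R.val ≤ ↑l := by
  calc Multiset.map l.get R.val ≤ Multiset.map l.get Finset.univ.val :=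
        Multiset.map_le_map (Finset.val_le_iff.2 (Finset.subset_univ R))
    _ = ↑l := by rw [Fin.univ_val_map, List.ofFn_get]

lemma exists_indexset {α : Type*} (l : List α) (s : Multiset α) (h : s ≤ ↑l) :
    ∃ R : Finset (Fin l.length), Multiset.map l.get R.val = s := by
  rw [← Multiset.coe_toList s, Multiset.coe_le] at h
  obtain ⟨l', hperm, hsub⟩ := h
  obtain ⟨f, hf⟩ := List.sublist_iff_exists_fin_orderEmbedding_get_eq.1 hsub
  refine ⟨Finset.map f.toEmbedding Finset.univ, ?_⟩
  rw [Finset.map_val, Multiset.map_map]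
  have h1 : (l.get ∘ f.toEmbedding) = l'.get := by
    funext i; exact (hf i).symm
  rw [h1]
  have h2 : Multiset.map l'.get Finset.univ.val = ↑l' := by
    rw [Fin.univ_val_map, List.ofFn_get]
  rw [h2]
  exact (Multiset.coe_eq_coe.2 hperm).trans (Multiset.coe_toList s)

lemma apScore_indexed (l : List (Sym2 C)) (R : Finset (Fin l.length)) (c : C) :
    apScore (Multiset.map l.get R.val) c = (R.filter fun i => c ∈ l.get i).card := by
  simp [apScore, Multiset.filter_map, Finset.card, Finset.filter, Function.comp]

lemma filter_univ_mem_and {α : Type*} [Fintype α] [DecidableEq α] (R : Finset α)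
    (q : α → Prop) [DecidablePred q] :
    univ.filter (fun a => a ∈ R ∧ q a) = R.filter q := by
  ext a; simp

end Aux

section EndsLemmas

variable {C : Type} [DecidableEq C] (p : C) (X Y : Multiset (Sym2 C)) (ℓ : ℕ)

@[simp] lemma taEnds_mem_l_l (c : C) (i) :
    (Sum.inl c : C ⊕ Unit) ∈ taEnds C p X Y ℓ (Sum.inl i) ↔ c ∈ X.toList.get i := by
  simp [taEnds, Sym2.mem_map]

@[simp] lemma taEnds_mem_l_m (c : C) (j) :
    (Sum.inl c : C ⊕ Unit) ∈ taEnds C p X Y ℓ (Sum.inr (Sum.inl j)) ↔ c ∈ Y.toList.get j := by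
  simp [taEnds, Sym2.mem_map]

@[simp] lemma taEnds_mem_l_r (c : C) (u : {c : C // c ≠ p} × Fin (spVal p X Y ℓ)) :
    (Sum.inl c : C ⊕ Unit) ∈ taEnds C p X Y ℓ (Sum.inr (Sum.inr u)) ↔ c = u.1.1 := by
  rcases u with ⟨cu, ju⟩
  simp [taEnds, Sym2.mem_iff]

@[simp] lemma taEnds_mem_r_l (z : Unit) (i) :
    (Sum.inr z : C ⊕ Unit) ∈ taEnds C p X Y ℓ (Sum.inl i) ↔ False := by
  simp [taEnds, Sym2.mem_map]

@[simp] lemma taEnds_mem_r_m (z : Unit) (j) :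
    (Sum.inr z : C ⊕ Unit) ∈ taEnds C p X Y ℓ (Sum.inr (Sum.inl j)) ↔ False := by
  simp [taEnds, Sym2.mem_map]

@[simp] lemma taEnds_mem_r_r (z : Unit) (u : {c : C // c ≠ p} × Fin (spVal p X Y ℓ)) :
    (Sum.inr z : C ⊕ Unit) ∈ taEnds C p X Y ℓ (Sum.inr (Sum.inr u)) ↔ True := by
  rcases u with ⟨cu, ju⟩
  simp [taEnds, Sym2.mem_iff]

end EndsLemmas

/-- `p` can be made a 2-Approval winner by adding exactly `k = |X| − ℓ` votes
from `X` and exactly `ℓ` votes from `Y` iff `H` has a perfect `b`-matching with exactly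
`k` red edges and exactly `ℓ` blue edges. -/
theorem stmt1 {C : Type} [Fintype C] [DecidableEq C] (p : C) (X Y : Multiset (Sym2 C))
    (hX : ∀ v ∈ X, ¬ v.IsDiag) (hY : ∀ v ∈ Y, ¬ v.IsDiag)
    (ℓ : ℕ) (hℓX : ℓ ≤ Multiset.card X) (hℓY : ℓ ≤ Multiset.card Y)
    (hbx : 2 * Multiset.card X ≤ Fintype.card C * spVal p X Y ℓ) :
    (∃ X' ≤ X, ∃ Y' ≤ Y,
        Multiset.card X' = Multiset.card X - ℓ ∧ Multiset.card Y' = ℓ ∧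
        apWinner (X' + Y') p)
    ↔ ∃ S : Finset (TAEdge C p X Y ℓ),
        (∀ v : C ⊕ Unit,
            (S.filter (fun e => v ∈ taEnds C p X Y ℓ e)).card = taBval C p X Y ℓ v) ∧
        (S.filter (fun e => e.isLeft)).card = Multiset.card X - ℓ ∧
        (S.filter (fun e => ∃ j, e = Sum.inr (Sum.inl j))).card = ℓ := by
  classical
  have hcoeX : (X.toList : Multiset (Sym2 C)) = X := Multiset.coe_toList X
  have hcoeY : (Y.toList : Multiset (Sym2 C)) = Y := Multiset.coe_toList Y
  constructor
  · rintro ⟨X', hX'le, Y', hY'le, hcX, hcY, hwin⟩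
    obtain ⟨X'', hX''le, hcX'', hwinX, hsX⟩ :=
      exchange p X Y' (Multiset.card X - ℓ) _ X' hX'le hcX hwin le_rfl
    have hwinX' : apWinner (Y' + X'') p := by rwa [add_comm] at hwinX
    obtain ⟨Y'', hY''le, hcY'', hwinY, hsY⟩ :=
      exchange p Y X'' ℓ _ Y' hY'le hcY hwinX' le_rfl
    have hwinF : apWinner (X'' + Y'') p := by rwa [add_comm] at hwinY
    have hscore : apScore (X'' + Y'') p = spVal p X Y ℓ := by
      rw [apScore_add, hsX, hsY]; rfl
    have hWle : ∀ c, apScore (X'' + Y'') c ≤ spVal p X Y ℓ :=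
      fun c => hscore ▸ hwinF c
    have hnd : ∀ v ∈ X'' + Y'', ¬ v.IsDiag := by
      intro v hv
      rcases Multiset.mem_add.1 hv with h | h
      · exact hX v (Multiset.mem_of_le hX''le h)
      · exact hY v (Multiset.mem_of_le hY''le h)
    have hcW : Multiset.card (X'' + Y'') = Multiset.card X := by
      rw [Multiset.card_add, hcX'', hcY'']; omega
    have hsum : ∑ c : C, apScore (X'' + Y'') c = 2 * Multiset.card X := by
      rw [sum_apScore _ hnd, hcW]
    have hs2X : spVal p X Y ℓ ≤ 2 * Multiset.card X := by
      calc spVal p X Y ℓ = apScore (X'' + Y'') p := hscore.symm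
        _ ≤ ∑ c : C, apScore (X'' + Y'') c :=
            Finset.single_le_sum (fun c _ => Nat.zero_le _) (Finset.mem_univ p)
        _ = 2 * Multiset.card X := hsum
    obtain ⟨R, hR⟩ := exists_indexset X.toList X'' (by rw [hcoeX]; exact hX''le)
    obtain ⟨B, hB⟩ := exists_indexset Y.toList Y'' (by rw [hcoeY]; exact hY''le)
    set U : Finset ({c : C // c ≠ p} × Fin (spVal p X Y ℓ)) :=
      univ.filter (fun u => (u.2 : ℕ) < spVal p X Y ℓ - apScore (X'' + Y'') u.1.1)
      with hUdef
    set S : Finset (TAEdge C p X Y ℓ) :=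
      (R.map ⟨Sum.inl, Sum.inl_injective⟩ ∪
        B.map ⟨fun j => Sum.inr (Sum.inl j), fun a b h => by simpa using h⟩) ∪
        U.map ⟨fun u => Sum.inr (Sum.inr u), fun a b h => by simpa using h⟩ with hSdef
    have hmem1 : ∀ i, (Sum.inl i : TAEdge C p X Y ℓ) ∈ S ↔ i ∈ R := by
      intro i; simp [hSdef]
    have hmem2 : ∀ j, (Sum.inr (Sum.inl j) : TAEdge C p X Y ℓ) ∈ S ↔ j ∈ B := by
      intro j; rw [hSdef]; simp only [Finset.mem_union, Finset.mem_map]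
      constructor
      · rintro ((⟨a, _, h⟩ | ⟨a, ha, h⟩) | ⟨a, _, h⟩)
        · cases h
        · cases h; exact ha
        · cases h
      · intro hj; exact Or.inl (Or.inr ⟨j, hj, rfl⟩)
    have hmem3 : ∀ u, (Sum.inr (Sum.inr u) : TAEdge C p X Y ℓ) ∈ S ↔ u ∈ U := by
      intro u; rw [hSdef]; simp only [Finset.mem_union, Finset.mem_map]
      constructor
      · rintro ((⟨a, _, h⟩ | ⟨a, _, h⟩) | ⟨a, ha, h⟩)
        · cases h
        · cases h
        · cases h; exact ha
      · intro hu; exact Or.inr ⟨u, hu, rfl⟩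
    have hRcard : R.card = Multiset.card X - ℓ := by
      have h := congrArg Multiset.card hR
      rwa [Multiset.card_map, hcX''] at h
    have hBcard : B.card = ℓ := by
      have h := congrArg Multiset.card hB
      rwa [Multiset.card_map, hcY''] at h
    refine ⟨S, ?_, ?_, ?_⟩
    · intro v
      rw [card_filter_sum3]
      cases v with
      | inl c =>
        simp only [hmem1, hmem2, hmem3, taEnds_mem_l_l, taEnds_mem_l_m, taEnds_mem_l_r]
        rw [filter_univ_mem_and R, filter_univ_mem_and B, ← apScore_indexed, ← apScore_indexed,
          hR, hB]
        have htb : taBval C p X Y ℓ (Sum.inl c) = spVal p X Y ℓ := rfl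
        rw [htb]
        by_cases hc : c = p
        · have h3 : (univ.filter fun u : {c' : C // c' ≠ p} × Fin (spVal p X Y ℓ) =>
              u ∈ U ∧ c = u.1.1) = ∅ := by
            apply Finset.filter_eq_empty_iff.2
            rintro u _ ⟨_, h⟩
            exact u.1.2 (by rw [← h, hc])
          rw [h3, Finset.card_empty, hc]
          have := apScore_add X'' Y'' p
          omega
        · have h3 : (univ.filter fun u : {c' : C // c' ≠ p} × Fin (spVal p X Y ℓ) =>
              u ∈ U ∧ c = u.1.1)
              = univ.filter (fun u : {c' : C // c' ≠ p} × Fin (spVal p X Y ℓ) =>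
                (u.2 : ℕ) < spVal p X Y ℓ - apScore (X'' + Y'') u.1.1 ∧ u.1 = ⟨c, hc⟩) := by
            ext u
            simp only [Finset.mem_filter, Finset.mem_univ, true_and, hUdef, Subtype.ext_iff]
            constructor
            · rintro ⟨h1, h2⟩; exact ⟨h1, h2.symm⟩
            · rintro ⟨h1, h2⟩; exact ⟨h1, h2.symm⟩
          rw [h3, card_filter_prod_eq (spVal p X Y ℓ)
            (fun a : {c' : C // c' ≠ p} => spVal p X Y ℓ - apScore (X'' + Y'') a.1)
            (fun a => Nat.sub_le _ _) ⟨c, hc⟩]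
          have hcoe : apScore (X'' + Y'') ((⟨c, hc⟩ : {c' : C // c' ≠ p}) : C)
              = apScore (X'' + Y'') c := rfl
          rw [hcoe]
          have h4 := hWle c
          have h5 := apScore_add X'' Y'' c
          omega
      | inr z =>
        cases z
        simp only [hmem1, hmem2, hmem3, taEnds_mem_r_l, taEnds_mem_r_m, taEnds_mem_r_r,
          and_false, and_true, Finset.filter_false, Finset.card_empty]
        have hUU : univ.filter (fun u => u ∈ U) = U := by ext u; simp
        rw [hUU, hUdef, card_filter_prod (spVal p X Y ℓ)
          (fun a : {c' : C // c' ≠ p} => spVal p X Y ℓ - apScore (X'' + Y'') a.1)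
          (fun a => Nat.sub_le _ _)]
        have hsub := Finset.sum_subtype (p := fun c : C => c ≠ p) (F := inferInstance) (univ.erase p)
          (fun x => by simp) (fun c => spVal p X Y ℓ - apScore (X'' + Y'') c)
        rw [← hsub, Finset.sum_tsub_distrib _ (fun c _ => hWle c), Finset.sum_const,
          Finset.card_erase_of_mem (Finset.mem_univ p), Finset.card_univ, smul_eq_mul]
        have herase : ∑ c ∈ univ.erase p, apScore (X'' + Y'') c
            = 2 * Multiset.card X - spVal p X Y ℓ := by
          have := Finset.add_sum_erase univ (apScore (X'' + Y'')) (Finset.mem_univ p)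
          omega
        rw [herase]
        have htb : taBval C p X Y ℓ (Sum.inr ()) =
            Fintype.card C * spVal p X Y ℓ - 2 * Multiset.card X := rfl
        rw [htb]
        have hmul : (Fintype.card C - 1) * spVal p X Y ℓ
            = Fintype.card C * spVal p X Y ℓ - spVal p X Y ℓ := by
          rw [Nat.sub_mul, one_mul]
        have hC1 : 1 ≤ Fintype.card C := Fintype.card_pos_iff.2 ⟨p⟩
        have hsle : spVal p X Y ℓ ≤ Fintype.card C * spVal p X Y ℓ :=
          Nat.le_mul_of_pos_left _ hC1
        rw [hmul]
        omega
    · rw [card_filter_sum3]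
      simp only [hmem1, hmem2, hmem3, Sum.isLeft_inl, Sum.isLeft_inr, Bool.false_eq_true,
        and_true, and_false, Finset.filter_false, Finset.card_empty]
      have hRR : univ.filter (fun i => i ∈ R) = R := by ext i; simp
      rw [hRR, hRcard]
      omega
    · rw [card_filter_sum3]
      have e1 : ∀ a : Fin X.toList.length,
          (∃ j, (Sum.inl a : TAEdge C p X Y ℓ) = Sum.inr (Sum.inl j)) ↔ False := by
        intro a; simp
      have e2 : ∀ b : Fin Y.toList.length,
          (∃ j, (Sum.inr (Sum.inl b) : TAEdge C p X Y ℓ) = Sum.inr (Sum.inl j)) ↔ True := by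
        intro b; simp
      have e3 : ∀ u, (∃ j, (Sum.inr (Sum.inr u) : TAEdge C p X Y ℓ) = Sum.inr (Sum.inl j))
          ↔ False := by
        intro u; simp
      simp only [hmem1, hmem2, hmem3, e1, e2, e3, and_true, and_false,
        Finset.filter_false, Finset.card_empty]
      have hBB : univ.filter (fun j => j ∈ B) = B := by ext j; simp
      rw [hBB, hBcard]
      omega
  · rintro ⟨S, hdeg, hred, hblue⟩
    refine ⟨Multiset.map X.toList.get
        (univ.filter (fun i => (Sum.inl i : TAEdge C p X Y ℓ) ∈ S)).val,
      le_trans (indexed_le _ _) hcoeX.le,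
      Multiset.map Y.toList.get
        (univ.filter (fun j => (Sum.inr (Sum.inl j) : TAEdge C p X Y ℓ) ∈ S)).val,
      le_trans (indexed_le _ _) hcoeY.le, ?_, ?_, ?_⟩
    · rw [card_filter_sum3] at hred
      simp only [Sum.isLeft_inl, Sum.isLeft_inr, Bool.false_eq_true, and_true, and_false,
        Finset.filter_false, Finset.card_empty, add_zero] at hred
      rw [Multiset.card_map]
      exact hred
    · rw [card_filter_sum3] at hblue
      have e1 : ∀ a : Fin X.toList.length,
          (∃ j, (Sum.inl a : TAEdge C p X Y ℓ) = Sum.inr (Sum.inl j)) ↔ False := by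
        intro a; simp
      have e2 : ∀ b : Fin Y.toList.length,
          (∃ j, (Sum.inr (Sum.inl b) : TAEdge C p X Y ℓ) = Sum.inr (Sum.inl j)) ↔ True := by
        intro b; simp
      have e3 : ∀ u, (∃ j, (Sum.inr (Sum.inr u) : TAEdge C p X Y ℓ) = Sum.inr (Sum.inl j))
          ↔ False := by
        intro u; simp
      simp only [e1, e2, e3, and_true, and_false,
        Finset.filter_false, Finset.card_empty, add_zero, zero_add] at hblue
      rw [Multiset.card_map]
      exact hblue
    · have hsc : ∀ c : C,
          (apScore (Multiset.map X.toList.get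
              (univ.filter (fun i => (Sum.inl i : TAEdge C p X Y ℓ) ∈ S)).val) c
            + apScore (Multiset.map Y.toList.get
              (univ.filter (fun j => (Sum.inr (Sum.inl j) : TAEdge C p X Y ℓ) ∈ S)).val) c)
            + (univ.filter (fun u : {c' : C // c' ≠ p} × Fin (spVal p X Y ℓ) =>
                (Sum.inr (Sum.inr u) : TAEdge C p X Y ℓ) ∈ S ∧ c = u.1.1)).card
            = spVal p X Y ℓ := by
        intro c
        have h := hdeg (Sum.inl c)
        rw [card_filter_sum3] at h
        simp only [taEnds_mem_l_l, taEnds_mem_l_m, taEnds_mem_l_r] at h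
        rw [apScore_indexed, apScore_indexed, Finset.filter_filter, Finset.filter_filter]
        exact h
      intro d
      have hple : ∀ c : C, apScore (Multiset.map X.toList.get
            (univ.filter (fun i => (Sum.inl i : TAEdge C p X Y ℓ) ∈ S)).val
          + Multiset.map Y.toList.get
            (univ.filter (fun j => (Sum.inr (Sum.inl j) : TAEdge C p X Y ℓ) ∈ S)).val) c
          ≤ spVal p X Y ℓ := by
        intro c
        rw [apScore_add]
        have := hsc c
        omega
      have hpp : apScore (Multiset.map X.toList.get
            (univ.filter (fun i => (Sum.inl i : TAEdge C p X Y ℓ) ∈ S)).val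
          + Multiset.map Y.toList.get
            (univ.filter (fun j => (Sum.inr (Sum.inl j) : TAEdge C p X Y ℓ) ∈ S)).val) p
          = spVal p X Y ℓ := by
        rw [apScore_add]
        have h := hsc p
        have h0 : (univ.filter (fun u : {c' : C // c' ≠ p} × Fin (spVal p X Y ℓ) =>
            (Sum.inr (Sum.inr u) : TAEdge C p X Y ℓ) ∈ S ∧ p = u.1.1)).card = 0 := by
          rw [Finset.card_eq_zero]
          apply Finset.filter_eq_empty_iff.2
          rintro u _ ⟨_, hu⟩
          exact u.1.2 hu.symm
        omega
      rw [hpp]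
      exact hple d
end

section
/- Let C be a finite candidate set with p ∈ C, let s : C → ℤ be arbitrary (the First-Last scores of the candidates from the registered voters), and let W₁ and W₂ be finite multisets of First-Last votes on C in which no vote has p as its first or last component. Let k, ℓ ∈ ℕ, assume b_x := Σ_{a ∈ C∖{p}} (s(p) − s(a)) ≥ 0, and let M be an integer with M ≥ |W₁| + |W₂| + |s(p) − s(a)| for every a ∈ C∖{p}. Define a loopless multigraph H: its vertices are two copies a and a′ of each candidate a ∈ C∖{p}, together with one further vertex x; for each vote (b, a) in W₁ there is one red edge with endpoints a and b′; for each vote (b, a) in W₂ there is one blue edge with endpoints a and b′; in addition, for every a ∈ C∖{p} there are M parallel uncolored edges with endpoints a and a′ and M parallel uncolored edges with endpoints x and a′. Set capacities b(a′) = M and b(a) = M + s(a) − s(p) for every a ∈ C∖{p}, and b(x) = b_x. Then there exist submultisets W₁′ of W₁ and W₂′ of W₂ with |W₁′| = k and |W₂′| = ℓ such that for every a ∈ C∖{p} one has s(a) + #{votes in W₁′ + W₂′ with first component a} − #{votes in W₁′ + W₂′ with last component a} ≤ s(p) (i.e., adding exactly those k + ℓ votes makes p a First-Last winner), if and only if H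 has a perfect b-matching containing exactly k red edges and exactly ℓ blue edges. -/
/-- Edge-index set of `H`: one red edge for each vote in `W₁`, one blue edge for each vote
in `W₂`, and for each candidate `a ≠ p`, `M` parallel uncolored edges `a–a′` and `M`
parallel uncolored edges `x–a′`. -/
abbrev FLEdgeRB (C : Type) [DecidableEq C] (p : C)
    (W₁ W₂ : Multiset ({a : C // a ≠ p} × {a : C // a ≠ p})) (M : ℕ) : Type :=
  (Fin W₁.toList.length ⊕ Fin W₂.toList.length) ⊕
    (({a : C // a ≠ p} × Fin M) ⊕ ({a : C // a ≠ p} × Fin M))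

/-- Endpoints of the edges of `H`: the colored edge of a vote `(b, a)` joins the unprimed
copy of `a` to the primed copy of `b`; the uncolored edges join `a` to `a′` and `x` to `a′`. -/
noncomputable def flEndsRB (C : Type) [DecidableEq C] (p : C)
    (W₁ W₂ : Multiset ({a : C // a ≠ p} × {a : C // a ≠ p})) (M : ℕ) :
    FLEdgeRB C p W₁ W₂ M → Sym2 (FLVert C p)
  | Sum.inl (Sum.inl i) =>
      s(Sum.inl (Sum.inl (W₁.toList.get i).2), Sum.inl (Sum.inr (W₁.toList.get i).1))
  | Sum.inl (Sum.inr j) =>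
      s(Sum.inl (Sum.inl (W₂.toList.get j).2), Sum.inl (Sum.inr (W₂.toList.get j).1))
  | Sum.inr (Sum.inl (a, _)) => s(Sum.inl (Sum.inl a), Sum.inl (Sum.inr a))
  | Sum.inr (Sum.inr (a, _)) => s(Sum.inr (), Sum.inl (Sum.inr a))

namespace Multiset

theorem exists_le_map_eq_of_le_map {α β : Type*} [DecidableEq β] {f : α → β}
    {s : Multiset α} {t : Multiset β} (h : t ≤ s.map f) : ∃ u ≤ s, u.map f = t := by
  induction s using Multiset.induction_on generalizing t with
  | empty => exact ⟨0, le_rfl, by simpa [eq_comm] using h⟩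
  | cons a s ih =>
    rw [map_cons] at h
    by_cases ha : f a ∈ t
    · rw [← cons_erase ha, cons_le_cons_iff] at h
      obtain ⟨u, hu, hut⟩ := ih h
      exact ⟨a ::ₘ u, cons_le_cons a hu, by rw [map_cons, hut, cons_erase ha]⟩
    · obtain ⟨u, hu, rfl⟩ := ih ((le_cons_of_notMem ha).mp h)
      exact ⟨u, hu.trans (le_cons_self s a), rfl⟩

theorem le_map_univ_iff_exists_finset {ι α : Type*} [Fintype ι] [DecidableEq α] (g : ι → α)
    (t : Multiset α) :
    t ≤ (Finset.univ : Finset ι).val.map g ↔ ∃ I : Finset ι, I.val.map g = t := by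
  constructor
  · intro h
    obtain ⟨u, hu, rfl⟩ := exists_le_map_eq_of_le_map h
    exact ⟨⟨u, nodup_of_le hu Finset.univ.nodup⟩, rfl⟩
  · rintro ⟨I, rfl⟩
    exact map_le_map (Finset.val_le_iff.mpr I.subset_univ)

theorem map_get_univ_toList {α : Type*} (W : Multiset α) :
    (Finset.univ : Finset (Fin W.toList.length)).val.map W.toList.get = W := by
  rw [Fin.univ_val_map, List.ofFn_get, coe_toList]

theorem le_iff_exists_finset_map_get {α : Type*} [DecidableEq α] {W' W : Multiset α} :
    W' ≤ W ↔ ∃ I : Finset (Fin W.toList.length), I.val.map W.toList.get = W' := by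
  conv_lhs => rw [← map_get_univ_toList W]
  exact le_map_univ_iff_exists_finset _ _

theorem sum_card_filter_eq_card {α β : Type*} [Fintype β] [DecidableEq β] (f : α → β)
    (W : Multiset α) : ∑ b, card (W.filter fun v => f v = b) = card W := by
  rw [← card_map f, ← sum_count_eq_card (s := Finset.univ) fun _ _ => Finset.mem_univ _]
  simp only [count_map, eq_comm]

end Multiset

namespace Finset

theorem card_filter_disjSum {α β : Type*} (s : Finset α) (t : Finset β)
    (q : α ⊕ β → Prop) [DecidablePred q] :
    ((s.disjSum t).filter q).card
      = (s.filter fun x => q (Sum.inl x)).card + (t.filter fun x => q (Sum.inr x)).card := by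
  rw [← card_disjSum]
  congr 1
  ext (x | x) <;> simp

theorem exists_eq_disjSum {α β : Type*} (S : Finset (α ⊕ β)) :
    ∃ (s : Finset α) (t : Finset β), S = s.disjSum t :=
  ⟨S.toLeft, S.toRight, S.toLeft_disjSum_toRight.symm⟩

theorem exists_card_filter_fst_eq {γ : Type*} [Fintype γ] [DecidableEq γ] {M : ℕ} (m : γ → ℕ)
    (hm : ∀ a, m a ≤ M) : ∃ A : Finset (γ × Fin M), ∀ a, (A.filter fun q => q.1 = a).card = m a := by
  refine ⟨univ.filter fun q => (q.2 : ℕ) < m q.1, fun a => ?_⟩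
  have hfiber : ((univ.filter fun q : γ × Fin M => (q.2 : ℕ) < m q.1).filter fun q => q.1 = a)
      = {a} ×ˢ univ.filter fun j : Fin M => (j : ℕ) < m a := by
    ext ⟨b, j⟩
    simp only [mem_filter, mem_univ, true_and, mem_product, mem_singleton]
    constructor
    · rintro ⟨hj, rfl⟩; exact ⟨rfl, hj⟩
    · rintro ⟨rfl, hj⟩; exact ⟨hj, rfl⟩
  rw [hfiber, card_product, card_singleton, one_mul, Fin.card_filter_val_lt, min_eq_right (hm a)]

end Finset

section Degrees

variable {C : Type} {p : C}
  {W₁ W₂ : Multiset ({a : C // a ≠ p} × {a : C // a ≠ p})} {M : ℕ}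
  (I₁ : Finset (Fin W₁.toList.length)) (I₂ : Finset (Fin W₂.toList.length))
  (A B : Finset ({a : C // a ≠ p} × Fin M))

noncomputable def selectedVotes : Multiset ({a : C // a ≠ p} × {a : C // a ≠ p}) :=
  I₁.val.map W₁.toList.get + I₂.val.map W₂.toList.get

theorem card_filter_selectedVotes (q : {a : C // a ≠ p} × {a : C // a ≠ p} → Prop)
    [DecidablePred q] :
    Multiset.card ((selectedVotes I₁ I₂).filter q)
      = (I₁.filter fun i => q (W₁.toList.get i)).card
        + (I₂.filter fun j => q (W₂.toList.get j)).card := by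
  simp only [selectedVotes, Multiset.filter_add, Multiset.card_add, Multiset.filter_map,
    Multiset.card_map, ← Finset.filter_val, Finset.card_val, Function.comp_def]

variable [DecidableEq C]

theorem card_incident_unprimed (a : {a : C // a ≠ p}) :
    (((I₁.disjSum I₂).disjSum (A.disjSum B)).filter
        (fun e => (Sum.inl (Sum.inl a) : FLVert C p) ∈ flEndsRB C p W₁ W₂ M e)).card
      = Multiset.card ((selectedVotes I₁ I₂).filter fun v => v.2 = a)
        + (A.filter fun q => q.1 = a).card := by
  rw [Finset.card_filter_disjSum, Finset.card_filter_disjSum, Finset.card_filter_disjSum,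
    card_filter_selectedVotes]
  simp only [flEndsRB, Sym2.mem_iff, Sum.inl.injEq, reduceCtorEq, or_false, Finset.filter_false,
    Finset.card_empty, add_zero, @eq_comm _ a]

theorem card_incident_primed (a : {a : C // a ≠ p}) :
    (((I₁.disjSum I₂).disjSum (A.disjSum B)).filter
        (fun e => (Sum.inl (Sum.inr a) : FLVert C p) ∈ flEndsRB C p W₁ W₂ M e)).card
      = Multiset.card ((selectedVotes I₁ I₂).filter fun v => v.1 = a)
        + (A.filter fun q => q.1 = a).card + (B.filter fun q => q.1 = a).card := by
  rw [Finset.card_filter_disjSum, Finset.card_filter_disjSum, Finset.card_filter_disjSum,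
    card_filter_selectedVotes]
  simp only [flEndsRB, Sym2.mem_iff, Sum.inl.injEq, Sum.inr.injEq, reduceCtorEq, false_or,
    @eq_comm _ a, add_assoc]

theorem card_incident_x :
    (((I₁.disjSum I₂).disjSum (A.disjSum B)).filter
        (fun e => (Sum.inr () : FLVert C p) ∈ flEndsRB C p W₁ W₂ M e)).card = B.card := by
  rw [Finset.card_filter_disjSum, Finset.card_filter_disjSum, Finset.card_filter_disjSum]
  simp only [flEndsRB, Sym2.mem_iff, reduceCtorEq, or_false, Finset.filter_false,
    Finset.filter_true, Finset.card_empty, zero_add]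

theorem card_red_edges :
    (((I₁.disjSum I₂).disjSum (A.disjSum B)).filter
        (fun e => ∃ i, e = Sum.inl (Sum.inl i))).card = I₁.card := by
  rw [Finset.card_filter_disjSum, Finset.card_filter_disjSum, Finset.card_filter_disjSum]
  simp

theorem card_blue_edges :
    (((I₁.disjSum I₂).disjSum (A.disjSum B)).filter
        (fun e => ∃ j, e = Sum.inl (Sum.inr j))).card = I₂.card := by
  rw [Finset.card_filter_disjSum, Finset.card_filter_disjSum, Finset.card_filter_disjSum]
  simp

end Degrees

theorem exists_uncolored_counts_of_score_le {M F L : ℕ} {x y : ℤ} (hM : (L : ℤ) + |y - x| ≤ M)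
    (hscore : x + F - L ≤ y) :
    ∃ α β : ℕ, L + α = ((M : ℤ) + x - y).toNat ∧ F + α + β = M ∧ (β : ℤ) = y - x + L - F := by
  have := le_abs_self (y - x)
  exact ⟨((M : ℤ) + x - y - L).toNat, (y - x + L - F).toNat, by omega, by omega, by omega⟩

theorem score_le_iff_exists_uncolored {C : Type} [Fintype C] [DecidableEq C] {p : C}
    (s : C → ℤ) (M : ℕ) (V : Multiset ({a : C // a ≠ p} × {a : C // a ≠ p}))
    (hM : ∀ a : {a : C // a ≠ p}, (Multiset.card V : ℤ) + |s p - s a| ≤ M) :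
    (∀ a : {a : C // a ≠ p}, s a + (Multiset.card (V.filter fun v => v.1 = a) : ℤ)
        - (Multiset.card (V.filter fun v => v.2 = a) : ℤ) ≤ s p)
    ↔ ∃ A B : Finset ({a : C // a ≠ p} × Fin M),
        (∀ a, Multiset.card (V.filter fun v => v.2 = a) + (A.filter fun q => q.1 = a).card
            = ((M : ℤ) + s a - s p).toNat) ∧
        (∀ a, Multiset.card (V.filter fun v => v.1 = a) + (A.filter fun q => q.1 = a).card
            + (B.filter fun q => q.1 = a).card = M) ∧
        B.card = (∑ a ∈ Finset.univ.erase p, (s p - s a)).toNat := by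
  constructor
  · intro hscore
    have hlast : ∀ a : {a : C // a ≠ p},
        (Multiset.card (V.filter fun v => v.2 = a) : ℤ) + |s p - s a| ≤ M := fun a => by
      have := Multiset.card_le_card (Multiset.filter_le (fun v => v.2 = a) V)
      have := hM a
      omega
    choose α β hα hαβ hβ using fun a => exists_uncolored_counts_of_score_le (hlast a) (hscore a)
    obtain ⟨A, hA⟩ := Finset.exists_card_filter_fst_eq (M := M) α fun a => by have := hαβ a; omega
    obtain ⟨B, hB⟩ := Finset.exists_card_filter_fst_eq (M := M) β fun a => by have := hαβ a; omega
    refine ⟨A, B, fun a => by rw [hA, hα], fun a => by rw [hA, hB, hαβ], ?_⟩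
    have hBsum : (B.card : ℤ) = ∑ a ∈ Finset.univ.erase p, (s p - s a) := by
      rw [Finset.sum_subtype (p := (· ≠ p)) _ (fun _ => by simp),
        Finset.card_eq_sum_card_fiberwise (fun q _ => Finset.mem_univ q.1), Nat.cast_sum]
      simp only [hB, hβ, Finset.sum_add_distrib, Finset.sum_sub_distrib, ← Nat.cast_sum,
        Multiset.sum_card_filter_eq_card]
      ring
    omega
  · rintro ⟨A, B, hunprimed, hprimed, -⟩ a
    have h₁ := hunprimed a
    have h₂ := hprimed a
    omega

theorem perfect_bMatching_disjSum_iff {C : Type} [Fintype C] [DecidableEq C] {p : C} (s : C → ℤ)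
    {W₁ W₂ : Multiset ({a : C // a ≠ p} × {a : C // a ≠ p})} {M : ℕ}
    (I₁ : Finset (Fin W₁.toList.length)) (I₂ : Finset (Fin W₂.toList.length))
    (A B : Finset ({a : C // a ≠ p} × Fin M)) :
    (∀ v : FLVert C p, (((I₁.disjSum I₂).disjSum (A.disjSum B)).filter
        (fun e => v ∈ flEndsRB C p W₁ W₂ M e)).card = flBval C p s M v)
    ↔ (∀ a, Multiset.card ((selectedVotes I₁ I₂).filter fun v => v.2 = a)
            + (A.filter fun q => q.1 = a).card = ((M : ℤ) + s a - s p).toNat) ∧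
        (∀ a, Multiset.card ((selectedVotes I₁ I₂).filter fun v => v.1 = a)
            + (A.filter fun q => q.1 = a).card + (B.filter fun q => q.1 = a).card = M) ∧
        B.card = (∑ a ∈ Finset.univ.erase p, (s p - s a)).toNat := by
  simp only [Sum.forall, card_incident_unprimed, card_incident_primed, card_incident_x, flBval,
    forall_const, and_assoc]

theorem stmt5_general {C : Type} [Fintype C] [DecidableEq C] (p : C) (s : C → ℤ)
    (W₁ W₂ : Multiset ({a : C // a ≠ p} × {a : C // a ≠ p}))
    (k ℓ : ℕ) (M : ℕ)
    (hM : ∀ a : C, a ≠ p →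
      (Multiset.card W₁ : ℤ) + (Multiset.card W₂ : ℤ) + |s p - s a| ≤ (M : ℤ)) :
    (∃ W₁' ≤ W₁, ∃ W₂' ≤ W₂,
        Multiset.card W₁' = k ∧ Multiset.card W₂' = ℓ ∧ ∀ a : C, a ≠ p →
          s a + ((Multiset.card ((W₁' + W₂').filter (fun v => v.1.1 = a))) : ℤ)
              - ((Multiset.card ((W₁' + W₂').filter (fun v => v.2.1 = a))) : ℤ) ≤ s p)
    ↔ ∃ S : Finset (FLEdgeRB C p W₁ W₂ M),
        (∀ v : FLVert C p,
            (S.filter (fun e => v ∈ flEndsRB C p W₁ W₂ M e)).card = flBval C p s M v) ∧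
        (S.filter (fun e => ∃ i, e = Sum.inl (Sum.inl i))).card = k ∧
        (S.filter (fun e => ∃ j, e = Sum.inl (Sum.inr j))).card = ℓ := by
  have hbound : ∀ W₁' ≤ W₁, ∀ W₂' ≤ W₂, ∀ a : {a : C // a ≠ p},
      (Multiset.card (W₁' + W₂') : ℤ) + |s p - s a| ≤ M := fun _ h₁ _ h₂ a => by
    have := Multiset.card_le_card h₁
    have := Multiset.card_le_card h₂
    have := hM a a.2
    rw [Multiset.card_add]
    push_cast
    omega
  constructor
  · rintro ⟨W₁', h₁, W₂', h₂, rfl, rfl, hscore⟩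
    obtain ⟨A, B, hfill⟩ := (score_le_iff_exists_uncolored s M _ (hbound _ h₁ _ h₂)).mp fun a => by
      simpa only [Subtype.ext_iff] using hscore a a.2
    obtain ⟨I₁, rfl⟩ := Multiset.le_iff_exists_finset_map_get.mp h₁
    obtain ⟨I₂, rfl⟩ := Multiset.le_iff_exists_finset_map_get.mp h₂
    refine ⟨(I₁.disjSum I₂).disjSum (A.disjSum B), (perfect_bMatching_disjSum_iff s ..).mpr hfill,
      ?_, ?_⟩
    · rw [card_red_edges, Multiset.card_map, Finset.card_val]
    · rw [card_blue_edges, Multiset.card_map, Finset.card_val]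
  · rintro ⟨S, hS, rfl, rfl⟩
    obtain ⟨I, J, rfl⟩ := S.exists_eq_disjSum
    obtain ⟨I₁, I₂, rfl⟩ := I.exists_eq_disjSum
    obtain ⟨A, B, rfl⟩ := J.exists_eq_disjSum
    have h₁ := Multiset.le_iff_exists_finset_map_get.mpr ⟨I₁, rfl⟩
    have h₂ := Multiset.le_iff_exists_finset_map_get.mpr ⟨I₂, rfl⟩
    have hscore := (score_le_iff_exists_uncolored s M _ (hbound _ h₁ _ h₂)).mpr
      ⟨A, B, (perfect_bMatching_disjSum_iff s ..).mp hS⟩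
    refine ⟨_, h₁, _, h₂, ?_, ?_, fun a ha => by simpa only [Subtype.ext_iff] using hscore ⟨a, ha⟩⟩
    · rw [card_red_edges, Multiset.card_map, Finset.card_val]
    · rw [card_blue_edges, Multiset.card_map, Finset.card_val]

/-- exactly `k` votes of `W₁` and exactly `ℓ` votes of `W₂` (none of which
involve `p`) can be added so that every candidate `a ≠ p` ends with score at most that of
`p` (i.e. `p` becomes a First-Last winner), iff the multigraph `H` has a perfect
`b`-matching with exactly `k` red edges and exactly `ℓ` blue edges. -/
theorem stmt5 {C : Type} [Fintype C] [DecidableEq C] (p : C) (s : C → ℤ)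
    (W₁ W₂ : Multiset ({a : C // a ≠ p} × {a : C // a ≠ p}))
    (hW₁ : ∀ v ∈ W₁, v.1 ≠ v.2) (hW₂ : ∀ v ∈ W₂, v.1 ≠ v.2)
    (k ℓ : ℕ) (M : ℕ)
    (hbx : 0 ≤ ∑ a ∈ Finset.univ.erase p, (s p - s a))
    (hM : ∀ a : C, a ≠ p →
      (Multiset.card W₁ : ℤ) + (Multiset.card W₂ : ℤ) + |s p - s a| ≤ (M : ℤ)) :
    (∃ W₁' ≤ W₁, ∃ W₂' ≤ W₂,
        Multiset.card W₁' = k ∧ Multiset.card W₂' = ℓ ∧ ∀ a : C, a ≠ p →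
          s a + ((Multiset.card ((W₁' + W₂').filter (fun v => v.1.1 = a))) : ℤ)
              - ((Multiset.card ((W₁' + W₂').filter (fun v => v.2.1 = a))) : ℤ) ≤ s p)
    ↔ ∃ S : Finset (FLEdgeRB C p W₁ W₂ M),
        (∀ v : FLVert C p,
            (S.filter (fun e => v ∈ flEndsRB C p W₁ W₂ M e)).card = flBval C p s M v) ∧
        (S.filter (fun e => ∃ i, e = Sum.inl (Sum.inl i))).card = k ∧
        (S.filter (fun e => ∃ j, e = Sum.inl (Sum.inr j))).card = ℓ :=
  stmt5_general p s W₁ W₂ k ℓ M hM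
end

section
/- Let G be a loopless multigraph with vertex set V and edge-index set E, let R ⊆ E (the red edges), let b : V → ℕ satisfy b(v) ≤ deg(v) for every vertex v, where deg(v) is the number of edges having v as an endpoint, and let k ∈ ℕ. For each vertex v fix a bijection σ_v from the edges incident with v to {1, …, deg(v)}. Define a finite simple graph G′: its vertices are, for each v ∈ V, the vertices (v, 1), …, (v, deg(v)) together with deg(v) − b(v) padding vertices p_{v,1}, …, p_{v, deg(v)−b(v)}; its edges are, for each v ∈ V, all edges {p_{v,s}, (v, i)} with 1 ≤ s ≤ deg(v) − b(v) and 1 ≤ i ≤ deg(v) (these edges are not red), and, for each e ∈ E with endpoints v and w, the edge {(v, σ_v(e)), (w, σ_w(e))}, which is red if and only if e ∈ R. Then G has a perfect b-matching containing exactly k red edges if and only if G′ has a perfect matching containing exactly k red edges. -/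
attribute [local instance] Classical.propDecidable

/-- The degree of vertex `v` in the loopless multigraph with edge-endpoint map `ends`:
the number of edges having `v` as an endpoint. -/
def mdeg {VT ET : Type} [Fintype ET] [DecidableEq VT] (ends : ET → Sym2 VT) (v : VT) : ℕ :=
  (Finset.univ.filter (fun e => v ∈ ends e)).card

/-- Vertex set of `G′`: for each `v`, the vertices `(v,1), …, (v,deg v)` (left summand)
and the padding vertices `p_{v,1}, …, p_{v, deg v − b v}` (right summand). -/
abbrev GVert {VT ET : Type} [Fintype ET] [DecidableEq VT] (ends : ET → Sym2 VT)
    (b : VT → ℕ) : Type :=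
  (Σ v : VT, Fin (mdeg ends v)) ⊕ (Σ v : VT, Fin (mdeg ends v - b v))

/-- Edge set of `G′`: for each edge `e` of `G` the edge `{(v, σ_v e), (w, σ_w e)}` where
`v, w` are the endpoints of `e` (left summand, red iff `e ∈ R`), and for each `v` all
edges `{p_{v,s}, (v,i)}` (right summand, never red). -/
abbrev GEdge {VT ET : Type} [Fintype ET] [DecidableEq VT] (ends : ET → Sym2 VT)
    (b : VT → ℕ) : Type :=
  ET ⊕ (Σ v : VT, Fin (mdeg ends v - b v) × Fin (mdeg ends v))

/-- The incidence relation of `G′`: vertex `(v,i)` is incident with the edge coming from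
`e ∈ E(G)` iff `v` is an endpoint of `e` and `σ_v e = i`; vertex `(v,i)` is incident with
the padding edge `{p_{w,s}, (w,j)}` iff `v = w` and `i = j`; and padding vertex `p_{v,s}`
is incident with it iff `v = w` and `s` is its index. -/
def ginc {VT ET : Type} [Fintype ET] [DecidableEq VT] (ends : ET → Sym2 VT) (b : VT → ℕ)
    (σ : (v : VT) → {e : ET // v ∈ ends e} ≃ Fin (mdeg ends v)) :
    GVert ends b → GEdge ends b → Prop
  | Sum.inl ⟨v, i⟩, Sum.inl e => ∃ h : v ∈ ends e, σ v ⟨e, h⟩ = i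
  | Sum.inl x, Sum.inr ⟨w, (_, j)⟩ => x = ⟨w, j⟩
  | Sum.inr _, Sum.inl _ => False
  | Sum.inr x, Sum.inr ⟨w, (s, _)⟩ => x = ⟨w, s⟩

/-!
A perfect matching `M` of `G′` consists of a set `S` of edges of `G` and some padding edges.
Every padding vertex `p_{v,s}` is matched to a slot `(v, i)`, and every slot `(v, i)` is covered
either by its edge `σ_v⁻¹(i)` of `S` or by a padding edge, never by both. So the padding edges at
`v` form a bijection between the `deg v - b v` padding vertices and the slots whose edge is not in
`S`, of which there are `deg v - |S ∩ δ(v)|`; as `b v ≤ deg v`, this says `|S ∩ δ(v)| = b v`.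
Conversely, for a perfect `b`-matching `S` both sets have `deg v - b v` elements, and any
bijection between them completes `S` to a perfect matching of `G′`. Red edges of `G′` come only
from `S`, so both matchings have the same number of red edges.
-/

open Finset

lemma Finset.card_filter_sumElim_false {α β : Type*} (u : Finset (α ⊕ β)) (p : α → Prop)
    [DecidablePred p] [DecidablePred (Sum.elim p fun _ : β => False)] :
    #(u.filter (Sum.elim p fun _ => False)) = #(u.toLeft.filter p) := by
  rw [← card_map (Function.Embedding.inl : α ↪ α ⊕ β)]
  congr 1
  ext (a | b) <;> simp

namespace BMatchingGadget

variable {VT ET : Type} [Fintype ET] [DecidableEq VT] {ends : ET → Sym2 VT} {b : VT → ℕ}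
  (σ : (v : VT) → {e : ET // v ∈ ends e} ≃ Fin (mdeg ends v))

section Incidence

variable {σ}

lemma ginc_inl_inl {v : VT} {i : Fin (mdeg ends v)} {e : ET} :
    ginc ends b σ (.inl ⟨v, i⟩) (.inl e) ↔ e = (σ v).symm i := by
  constructor
  · rintro ⟨h, rfl⟩
    simp
  · rintro rfl
    exact ⟨((σ v).symm i).2, by simp⟩

lemma ginc_inl_inr {v : VT} {i : Fin (mdeg ends v)}
    {q : Σ w : VT, Fin (mdeg ends w - b w) × Fin (mdeg ends w)} :
    ginc ends b σ (.inl ⟨v, i⟩) (.inr q) ↔ ∃ s, q = ⟨v, (s, i)⟩ := by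
  obtain ⟨w, s, j⟩ := q
  constructor
  · rintro ⟨⟩
    exact ⟨s, rfl⟩
  · rintro ⟨t, ⟨⟩⟩
    rfl

lemma ginc_inr_inr {v : VT} {s : Fin (mdeg ends v - b v)}
    {q : Σ w : VT, Fin (mdeg ends w - b w) × Fin (mdeg ends w)} :
    ginc ends b σ (.inr ⟨v, s⟩) (.inr q) ↔ ∃ j, q = ⟨v, (s, j)⟩ := by
  obtain ⟨w, t, j⟩ := q
  constructor
  · rintro ⟨⟩
    exact ⟨j, rfl⟩
  · rintro ⟨j, ⟨⟩⟩
    rfl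

end Incidence

def IsPerfectMatching (M : Finset (GEdge ends b)) : Prop :=
  ∀ u, ∃! x, x ∈ M ∧ ginc ends b σ u x

lemma isPerfectMatching_iff_card_filter {M : Finset (GEdge ends b)} :
    IsPerfectMatching σ M ↔ ∀ u, #(M.filter (ginc ends b σ u)) = 1 := by
  simp only [IsPerfectMatching, card_eq_one_iff_existsUnique, mem_filter]

variable [DecidableEq ET]

def freeSlots (S : Finset ET) (v : VT) : Finset (Fin (mdeg ends v)) :=
  {i | ((σ v).symm i : ET) ∉ S}

lemma card_freeSlots_add_card_filter_mem (S : Finset ET) (v : VT) :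
    #(freeSlots σ S v) + #(S.filter (v ∈ ends ·)) = mdeg ends v := by
  have hused : #(S.filter (v ∈ ends ·)) = #{i | ((σ v).symm i : ET) ∈ S} := by
    refine card_bij' (fun e he => σ v ⟨e, (mem_filter.1 he).2⟩) (fun i _ => (σ v).symm i)
      (fun e he => by simpa using (mem_filter.1 he).1)
      (fun i hi => mem_filter.2 ⟨(mem_filter.1 hi).2, ((σ v).symm i).2⟩)
      (fun _ _ => by simp) (fun _ _ => by simp)
  rw [hused, add_comm, freeSlots, card_filter_add_card_filter_not, card_univ, Fintype.card_fin]

section Decomposition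

variable {σ} {M : Finset (GEdge ends b)}

lemma card_freeSlots_toLeft_of_isPerfectMatching (hM : IsPerfectMatching σ M) (v : VT) :
    #(freeSlots σ M.toLeft v) = mdeg ends v - b v := by
  have hpad : ∀ s : Fin (mdeg ends v - b v), ∃ j, .inr ⟨v, (s, j)⟩ ∈ M := by
    intro s
    obtain ⟨e | q, ⟨hq, hinc⟩, -⟩ := hM (.inr ⟨v, s⟩)
    · exact hinc.elim
    · obtain ⟨j, rfl⟩ := ginc_inr_inr.1 hinc
      exact ⟨j, hq⟩
  choose f hf using hpad
  have hinj : Function.Injective f := by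
    intro s t hst
    have := (hM (.inl ⟨v, f t⟩)).unique ⟨hf s, ginc_inl_inr.2 ⟨s, by rw [hst]⟩⟩
      ⟨hf t, ginc_inl_inr.2 ⟨t, rfl⟩⟩
    exact (by simpa using this : s = t ∧ f s = f t).1
  have himage : univ.image f = freeSlots σ M.toLeft v := by
    ext i
    simp only [mem_image, mem_univ, true_and, freeSlots, mem_filter, mem_toLeft]
    constructor
    · rintro ⟨s, rfl⟩ hS
      exact Sum.inl_ne_inr <|
        (hM (.inl ⟨v, f s⟩)).unique ⟨hS, ginc_inl_inl.2 rfl⟩ ⟨hf s, ginc_inl_inr.2 ⟨s, rfl⟩⟩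
    · intro hi
      obtain ⟨e | q, ⟨hq, hinc⟩, -⟩ := hM (.inl ⟨v, i⟩)
      · rw [ginc_inl_inl.1 hinc] at hq
        exact absurd hq hi
      · obtain ⟨s, rfl⟩ := ginc_inl_inr.1 hinc
        have := (hM (.inr ⟨v, s⟩)).unique ⟨hf s, ginc_inr_inr.2 ⟨_, rfl⟩⟩
          ⟨hq, ginc_inr_inr.2 ⟨_, rfl⟩⟩
        exact ⟨s, by simpa using this⟩
  rw [← himage, card_image_of_injective _ hinj, card_univ, Fintype.card_fin]

lemma card_filter_mem_toLeft_of_isPerfectMatching (hM : IsPerfectMatching σ M) {v : VT}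
    (hb : b v ≤ mdeg ends v) :
    #(M.toLeft.filter (v ∈ ends ·)) = b v := by
  have := card_freeSlots_add_card_filter_mem σ M.toLeft v
  rw [card_freeSlots_toLeft_of_isPerfectMatching hM] at this
  omega

end Decomposition

section Construction

variable [Fintype VT] (S : Finset ET) (τ : ∀ v, Fin (mdeg ends v - b v) ≃ freeSlots σ S v)

def gadgetMatching : Finset (GEdge ends b) :=
  S.disjSum <| univ.image fun q : Σ v, Fin (mdeg ends v - b v) => ⟨q.1, (q.2, τ q.1 q.2)⟩

variable {σ S τ}

lemma toLeft_gadgetMatching : (gadgetMatching σ S τ).toLeft = S :=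
  toLeft_disjSum

lemma inl_mem_gadgetMatching {e : ET} : .inl e ∈ gadgetMatching σ S τ ↔ e ∈ S :=
  inl_mem_disjSum

lemma inr_mem_gadgetMatching {v : VT} {s : Fin (mdeg ends v - b v)} {j : Fin (mdeg ends v)} :
    .inr ⟨v, (s, j)⟩ ∈ gadgetMatching σ S τ ↔ (τ v s : Fin (mdeg ends v)) = j := by
  simp only [gadgetMatching, inr_mem_disjSum, mem_image, mem_univ, true_and]
  constructor
  · rintro ⟨⟨w, t⟩, h⟩
    obtain ⟨rfl, h⟩ := Sigma.mk.inj_iff.1 h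
    obtain ⟨rfl, rfl⟩ := Prod.mk.inj (eq_of_heq h)
    rfl
  · rintro rfl
    exact ⟨⟨v, s⟩, rfl⟩

lemma existsUnique_slot_gadgetMatching (v : VT) (i : Fin (mdeg ends v)) :
    ∃! x, x ∈ gadgetMatching σ S τ ∧ ginc ends b σ (.inl ⟨v, i⟩) x := by
  by_cases hi : ((σ v).symm i : ET) ∈ S
  · refine ⟨.inl ((σ v).symm i), ⟨inl_mem_gadgetMatching.2 hi, ginc_inl_inl.2 rfl⟩, ?_⟩
    rintro (e | q) ⟨hmem, hinc⟩
    · rw [ginc_inl_inl.1 hinc]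
    · obtain ⟨t, rfl⟩ := ginc_inl_inr.1 hinc
      have hfree := (τ v t).2
      rw [inr_mem_gadgetMatching.1 hmem] at hfree
      exact absurd hi (mem_filter.1 hfree).2
  · have hfree : i ∈ freeSlots σ S v := mem_filter.2 ⟨mem_univ _, hi⟩
    refine ⟨.inr ⟨v, ((τ v).symm ⟨i, hfree⟩, i)⟩,
      ⟨inr_mem_gadgetMatching.2 (by simp), ginc_inl_inr.2 ⟨_, rfl⟩⟩, ?_⟩
    rintro (e | q) ⟨hmem, hinc⟩
    · rw [ginc_inl_inl.1 hinc, inl_mem_gadgetMatching] at hmem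
      exact absurd hmem hi
    · obtain ⟨t, rfl⟩ := ginc_inl_inr.1 hinc
      have hτ : τ v t = ⟨i, hfree⟩ := Subtype.ext (inr_mem_gadgetMatching.1 hmem)
      rw [← hτ, Equiv.symm_apply_apply]

lemma existsUnique_pad_gadgetMatching (v : VT) (s : Fin (mdeg ends v - b v)) :
    ∃! x, x ∈ gadgetMatching σ S τ ∧ ginc ends b σ (.inr ⟨v, s⟩) x := by
  refine ⟨.inr ⟨v, (s, τ v s)⟩, ⟨inr_mem_gadgetMatching.2 rfl, ginc_inr_inr.2 ⟨_, rfl⟩⟩, ?_⟩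
  rintro (e | q) ⟨hmem, hinc⟩
  · exact hinc.elim
  · obtain ⟨j, rfl⟩ := ginc_inr_inr.1 hinc
    rw [inr_mem_gadgetMatching.1 hmem]

lemma isPerfectMatching_gadgetMatching : IsPerfectMatching σ (gadgetMatching σ S τ) := by
  rintro (⟨v, i⟩ | ⟨v, s⟩)
  · exact existsUnique_slot_gadgetMatching v i
  · exact existsUnique_pad_gadgetMatching v s

end Construction

end BMatchingGadget

open BMatchingGadget

theorem stmt6_general {VT ET : Type} [Fintype VT] [DecidableEq VT] [Fintype ET] [DecidableEq ET]
    (ends : ET → Sym2 VT)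
    (R : Finset ET) (b : VT → ℕ) (hb : ∀ v : VT, b v ≤ mdeg ends v)
    (σ : (v : VT) → {e : ET // v ∈ ends e} ≃ Fin (mdeg ends v)) (k : ℕ) :
    (∃ S : Finset ET,
        (∀ v : VT, (S.filter (fun e => v ∈ ends e)).card = b v) ∧
        (S ∩ R).card = k)
    ↔ (∃ M : Finset (GEdge ends b),
        (∀ u : GVert ends b, (M.filter (fun e => ginc ends b σ u e)).card = 1) ∧
        (M.filter (fun e => Sum.elim (fun e' => e' ∈ R) (fun _ => False) e)).card = k) := by
  simp only [← isPerfectMatching_iff_card_filter, card_filter_sumElim_false, filter_mem_eq_inter]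
  constructor
  · rintro ⟨S, hS, rfl⟩
    have hfree v : mdeg ends v - b v = #(freeSlots σ S v) := by
      have := card_freeSlots_add_card_filter_mem σ S v
      have := hS v
      omega
    let τ v : Fin (mdeg ends v - b v) ≃ freeSlots σ S v :=
      (finCongr (hfree v)).trans (freeSlots σ S v).equivFin.symm
    exact ⟨gadgetMatching σ S τ, isPerfectMatching_gadgetMatching, by rw [toLeft_gadgetMatching]⟩
  · rintro ⟨M, hM, rfl⟩
    exact ⟨M.toLeft, fun v => card_filter_mem_toLeft_of_isPerfectMatching hM (hb v), rfl⟩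

/-- the loopless multigraph `G` has a perfect `b`-matching with exactly `k`
red edges iff the simple graph `G′` obtained by Tutte's gadget construction has a perfect
matching with exactly `k` red edges. -/
theorem stmt6 {VT ET : Type} [Fintype VT] [DecidableEq VT] [Fintype ET] [DecidableEq ET]
    (ends : ET → Sym2 VT) (hloop : ∀ e : ET, ¬ (ends e).IsDiag)
    (R : Finset ET) (b : VT → ℕ) (hb : ∀ v : VT, b v ≤ mdeg ends v)
    (σ : (v : VT) → {e : ET // v ∈ ends e} ≃ Fin (mdeg ends v)) (k : ℕ) :
    (∃ S : Finset ET,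
        (∀ v : VT, (S.filter (fun e => v ∈ ends e)).card = b v) ∧
        (S ∩ R).card = k)
    ↔ (∃ M : Finset (GEdge ends b),
        (∀ u : GVert ends b, (M.filter (fun e => ginc ends b σ u e)).card = 1) ∧
        (M.filter (fun e => Sum.elim (fun e' => e' ∈ R) (fun _ => False) e)).card = k) :=
  stmt6_general ends R b hb σ k
end

section
/- Let G be a finite simple graph on n vertices and let R and B be disjoint sets of edges of G (the red and blue edges). Let k, ℓ ∈ ℕ with k < n and ℓ < n. Construct a finite simple graph G′ from G as follows: for each blue edge e = {u, v} ∈ B, delete e, add 2n − 2 new vertices x_{e,1}, …, x_{e,2n−2}, and add the path u, x_{e,1}, x_{e,2}, …, x_{e,2n−2}, v consisting of 2n − 1 edges, colored alternately red and nonred starting and ending with red (so each such path contributes n red edges and n − 1 nonred edges); every edge of G not in B is kept and is red in G′ if and only if it lies in R. Then G has a perfect matching containing exactly k edges of R and exactly ℓ edges of B if and only if G′ has a perfect matching containing exactly ℓ·n + k red edges. -/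
/-- Vertex set of `G′`: the vertices of `G` together with, for each blue edge `e`,
`2n − 2` new internal path vertices `x_{e,1}, …, x_{e,2n−2}`. -/
abbrev PVert (V : Type) [DecidableEq V] (B : Finset (Sym2 V)) (n : ℕ) : Type :=
  V ⊕ ({e : Sym2 V // e ∈ B} × Fin (2 * n - 2))

/-- The `j`-th vertex (for `0 ≤ j ≤ 2n − 1`) of the path `u, x_{e,1}, …, x_{e,2n−2}, v`
replacing the blue edge `e` with orientation `or e = (u, v)`. -/
def pathVert {V : Type} [DecidableEq V] (B : Finset (Sym2 V)) (n : ℕ)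
    (or : Sym2 V → V × V) (e : {e : Sym2 V // e ∈ B}) (j : ℕ) : PVert V B n :=
  if h0 : j = 0 then Sum.inl (or e.1).1
  else if h : j < 2 * n - 1 then Sum.inr (e, ⟨j - 1, by omega⟩)
  else Sum.inl (or e.1).2

/-- The edge set of `G′`: the edges of `G` not in `B`, together with, for each blue edge,
the `2n − 1` edges of its replacing path. -/
noncomputable def pEdges {V : Type} [Fintype V] [DecidableEq V] (G : SimpleGraph V)
    [DecidableRel G.Adj] (B : Finset (Sym2 V)) (n : ℕ) (or : Sym2 V → V × V) :
    Finset (Sym2 (PVert V B n)) :=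
  (G.edgeFinset \ B).image (Sym2.map Sum.inl) ∪
    (Finset.univ : Finset ({e : Sym2 V // e ∈ B} × Fin (2 * n - 1))).image
      (fun x => s(pathVert B n or x.1 (x.2 : ℕ), pathVert B n or x.1 ((x.2 : ℕ) + 1)))

/-- The red edges of `G′`: the edges of `R`, together with, on each replacing path, the
1st, 3rd, …, (2n−1)-th path edges (i.e. those starting at an even position). -/
noncomputable def pRed {V : Type} [Fintype V] [DecidableEq V] (R B : Finset (Sym2 V))
    (n : ℕ) (or : Sym2 V → V × V) : Finset (Sym2 (PVert V B n)) :=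
  R.image (Sym2.map Sum.inl) ∪
    ((Finset.univ : Finset ({e : Sym2 V // e ∈ B} × Fin (2 * n - 1))).filter
        (fun x => Even (x.2 : ℕ))).image
      (fun x => s(pathVert B n or x.1 (x.2 : ℕ), pathVert B n or x.1 ((x.2 : ℕ) + 1)))

section Aux
variable {V : Type} [DecidableEq V]
variable (B : Finset (Sym2 V)) (n : ℕ) (or : Sym2 V → V × V)

def pe (e : {e : Sym2 V // e ∈ B}) (j : ℕ) : Sym2 (PVert V B n) :=
  s(pathVert B n or e j, pathVert B n or e (j + 1))

variable {B n or}

lemma pv0 (e : {e : Sym2 V // e ∈ B}) : pathVert B n or e 0 = Sum.inl (or e.1).1 := by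
  simp [pathVert]

lemma pvMid (e : {e : Sym2 V // e ∈ B}) {j : ℕ} (h1 : 1 ≤ j) (h2 : j < 2 * n - 1) :
    pathVert B n or e j = Sum.inr (e, ⟨j - 1, by omega⟩) := by
  unfold pathVert
  rw [dif_neg (by omega), dif_pos h2]

lemma pvLast (e : {e : Sym2 V // e ∈ B}) {j : ℕ} (h1 : 1 ≤ j) (h2 : 2 * n - 1 ≤ j) :
    pathVert B n or e j = Sum.inl (or e.1).2 := by
  unfold pathVert
  rw [dif_neg (by omega), dif_neg (by omega)]

lemma mem_pe_inl (hn : 2 ≤ n) {e : {e : Sym2 V // e ∈ B}} {v : V} {j : ℕ}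
    (hj : j < 2 * n - 1) :
    Sum.inl v ∈ pe B n or e j ↔
      (j = 0 ∧ v = (or e.1).1) ∨ (j = 2 * n - 2 ∧ v = (or e.1).2) := by
  unfold pe
  rw [Sym2.mem_iff]
  rcases Nat.eq_zero_or_pos j with h0 | h0
  · subst h0
    rw [pv0, pvMid e (by omega) (by omega)]
    constructor
    · rintro (h | h)
      · exact Or.inl ⟨rfl, Sum.inl.inj h⟩
      · simp at h
    · rintro (⟨-, rfl⟩ | ⟨h, -⟩)
      · exact Or.inl rfl
      · omega
  · by_cases hlast : j = 2 * n - 2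
    · subst hlast
      rw [pvMid e (by omega) (by omega), pvLast e (by omega) (by omega)]
      constructor
      · rintro (h | h)
        · simp at h
        · exact Or.inr ⟨rfl, Sum.inl.inj h⟩
      · rintro (⟨h, -⟩ | ⟨-, rfl⟩)
        · omega
        · exact Or.inr rfl
    · rw [pvMid e (by omega) (by omega), pvMid e (by omega) (by omega)]
      constructor
      · rintro (h | h) <;> simp at h
      · rintro (⟨h, -⟩ | ⟨h, -⟩) <;> omega

lemma mem_pe_inr {e f : {e : Sym2 V // e ∈ B}} {i : Fin (2 * n - 2)} {j : ℕ}
    (hj : j < 2 * n - 1) :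
    Sum.inr (f, i) ∈ pe B n or e j ↔ f = e ∧ (j = (i : ℕ) ∨ j = (i : ℕ) + 1) := by
  have hi := i.2
  unfold pe
  rw [Sym2.mem_iff]
  constructor
  · rintro (h | h)
    · rcases Nat.eq_zero_or_pos j with h0 | h0
      · subst h0; rw [pv0] at h; simp at h
      · rw [pvMid e h0 hj] at h
        obtain ⟨rfl, h2⟩ := Prod.mk.injEq .. ▸ Sum.inr.injEq .. ▸ h
        have : j - 1 = (i : ℕ) := by
          have := Fin.mk.injEq .. ▸ h2
          omega
        exact ⟨rfl, Or.inr (by omega)⟩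
    · by_cases hlast : j + 1 < 2 * n - 1
      · rw [pvMid e (by omega) hlast] at h
        obtain ⟨rfl, h2⟩ := Prod.mk.injEq .. ▸ Sum.inr.injEq .. ▸ h
        have : j + 1 - 1 = (i : ℕ) := by
          have := Fin.mk.injEq .. ▸ h2
          omega
        exact ⟨rfl, Or.inl (by omega)⟩
      · rw [pvLast e (by omega) (by omega)] at h; simp at h
  · rintro ⟨rfl, h | h⟩
    · subst h
      right
      rw [pvMid f (by omega) (by omega)]
      simp
    · subst h
      left
      rw [pvMid f (by omega) hj]
      simp [Fin.ext_iff]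


lemma exists_inr_mem (hn : 2 ≤ n) (e : {e : Sym2 V // e ∈ B}) {j : ℕ} (hj : j < 2 * n - 1) :
    ∃ i : Fin (2 * n - 2), Sum.inr (e, i) ∈ pe B n or e j := by
  by_cases h : j < 2 * n - 2
  · exact ⟨⟨j, h⟩, (mem_pe_inr hj).mpr ⟨rfl, Or.inl rfl⟩⟩
  · exact ⟨⟨j - 1, by omega⟩, (mem_pe_inr hj).mpr ⟨rfl, Or.inr (by simp only [Fin.val_mk]; omega)⟩⟩

lemma pe_ne_map_inl (hn : 2 ≤ n) (e : {e : Sym2 V // e ∈ B}) {j : ℕ} (hj : j < 2 * n - 1)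
    (e' : Sym2 V) : pe B n or e j ≠ Sym2.map Sum.inl e' := by
  intro h
  obtain ⟨i, hi⟩ := exists_inr_mem hn e hj
  rw [h, Sym2.mem_map] at hi
  obtain ⟨w, -, hw⟩ := hi
  exact nomatch hw

lemma pe_inj (hn : 2 ≤ n) {e f : {e : Sym2 V // e ∈ B}}
    (hne : (or e.1).1 ≠ (or e.1).2) {j j' : ℕ}
    (hj : j < 2 * n - 1) (hj' : j' < 2 * n - 1)
    (h : pe B n or e j = pe B n or f j') : e = f ∧ j = j' := by
  obtain ⟨i, hi⟩ := exists_inr_mem hn e hj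
  have hi' := hi
  rw [h] at hi'
  obtain ⟨rfl, hcase⟩ := (mem_pe_inr hj').mp hi'
  obtain ⟨-, hcase0⟩ := (mem_pe_inr hj).mp hi
  refine ⟨rfl, ?_⟩
  -- now e = f; show j = j'
  by_contra hne'
  -- j, j' ∈ {i, i+1}, j ≠ j', so {j,j'} = {i,i+1}
  have hjj : (j = (i:ℕ) ∧ j' = (i:ℕ) + 1) ∨ (j = (i:ℕ) + 1 ∧ j' = (i:ℕ)) := by omega
  -- pe e j and pe e j' share only the vertex pathVert (i+1); derive contradiction
  -- via comparing as unordered pairs using pathVert injectivity on [0, 2n-1]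
  have hpv : ∀ a b : ℕ, a ≤ 2 * n - 1 → b ≤ 2 * n - 1 →
      pathVert B n or e a = pathVert B n or e b → a = b := by
    intro a b ha hb hab
    rcases Nat.eq_zero_or_pos a with h0a | h0a
    · subst h0a
      rcases Nat.eq_zero_or_pos b with h0b | h0b
      · omega
      · rw [pv0] at hab
        by_cases hbmid : b < 2 * n - 1
        · rw [pvMid e h0b hbmid] at hab; exact nomatch hab
        · rw [pvLast e h0b (by omega)] at hab
          exact absurd (Sum.inl.inj hab) hne
    · by_cases hamid : a < 2 * n - 1
      · rw [pvMid e h0a hamid] at hab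
        rcases Nat.eq_zero_or_pos b with h0b | h0b
        · subst h0b; rw [pv0] at hab; exact nomatch hab
        · by_cases hbmid : b < 2 * n - 1
          · rw [pvMid e h0b hbmid] at hab
            have := Sum.inr.inj hab
            have : a - 1 = b - 1 := by
              have h2 := (Prod.mk.injEq .. ▸ this).2
              exact Fin.mk.injEq .. ▸ h2
            omega
          · rw [pvLast e h0b (by omega)] at hab; exact nomatch hab
      · rw [pvLast e h0a (by omega)] at hab
        rcases Nat.eq_zero_or_pos b with h0b | h0b
        · subst h0b; rw [pv0] at hab
          exact absurd (Sum.inl.inj hab).symm hne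
        · by_cases hbmid : b < 2 * n - 1
          · rw [pvMid e h0b hbmid] at hab; exact nomatch hab
          · omega
  unfold pe at h
  rw [Sym2.eq_iff] at h
  rcases h with ⟨h1, h2⟩ | ⟨h1, h2⟩
  · have := hpv j j' (by omega) (by omega) h1
    omega
  · have e1 := hpv j (j' + 1) (by omega) (by omega) h1
    have e2 := hpv (j + 1) j' (by omega) (by omega) h2
    omega


variable (B n or) in
noncomputable def phi (M : Finset (Sym2 V)) : Finset (Sym2 (PVert V B n)) :=
  ((M \ B).image (Sym2.map Sum.inl)) ∪
    ((Finset.univ : Finset ({e : Sym2 V // e ∈ B} × Fin (2 * n - 1))).filter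
        (fun x => if x.1.1 ∈ M then Even (x.2 : ℕ) else Odd (x.2 : ℕ))).image
      (fun x => pe B n or x.1 (x.2 : ℕ))

lemma mem_phi {M : Finset (Sym2 V)} {a : Sym2 (PVert V B n)} :
    a ∈ phi B n or M ↔
      (∃ e ∈ M \ B, a = Sym2.map Sum.inl e) ∨
      (∃ (e : {e : Sym2 V // e ∈ B}) (j : ℕ), j < 2 * n - 1 ∧
        (if e.1 ∈ M then Even j else Odd j) ∧ a = pe B n or e j) := by
  unfold phi
  rw [Finset.mem_union, Finset.mem_image, Finset.mem_image]
  constructor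
  · rintro (⟨e, he, rfl⟩ | ⟨x, hx, rfl⟩)
    · exact Or.inl ⟨e, he, rfl⟩
    · rw [Finset.mem_filter] at hx
      exact Or.inr ⟨x.1, x.2, x.2.2, hx.2, rfl⟩
  · rintro (⟨e, he, rfl⟩ | ⟨e, j, hj, hcond, rfl⟩)
    · exact Or.inl ⟨e, he, rfl⟩
    · refine Or.inr ⟨(e, ⟨j, hj⟩), ?_, rfl⟩
      rw [Finset.mem_filter]
      exact ⟨Finset.mem_univ _, hcond⟩

lemma map_inl_mem_phi (hB2 : ∀ e ∈ B, 2 ≤ n) {M : Finset (Sym2 V)} {e : Sym2 V} :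
    Sym2.map Sum.inl e ∈ phi B n or M ↔ e ∈ M \ B := by
  rw [mem_phi]
  constructor
  · rintro (⟨e', he', h⟩ | ⟨f, j, hj, -, h⟩)
    · rwa [(Sym2.map.injective Sum.inl_injective h : e = e')]
    · exact absurd h.symm (pe_ne_map_inl (hB2 f.1 f.2) f hj e)
  · intro h
    exact Or.inl ⟨e, h, rfl⟩

lemma pe_mem_phi (hB2 : ∀ e ∈ B, 2 ≤ n)
    (hne : ∀ e : {e : Sym2 V // e ∈ B}, (or e.1).1 ≠ (or e.1).2)
    {M : Finset (Sym2 V)} {e : {e : Sym2 V // e ∈ B}} {j : ℕ} (hj : j < 2 * n - 1) :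
    pe B n or e j ∈ phi B n or M ↔ (if e.1 ∈ M then Even j else Odd j) := by
  rw [mem_phi]
  constructor
  · rintro (⟨e', -, h⟩ | ⟨f, j', hj', hcond, h⟩)
    · exact absurd h (pe_ne_map_inl (hB2 e.1 e.2) e hj e')
    · obtain ⟨rfl, rfl⟩ := pe_inj (hB2 e.1 e.2) (hne e) hj hj' h
      exact hcond
  · intro h
    exact Or.inr ⟨e, j, hj, h, rfl⟩

variable (B n or) in
noncomputable def phiV (v : V) (e : Sym2 V) : Sym2 (PVert V B n) :=
  if h : e ∈ B then
    (if (or e).1 = v then pe B n or ⟨e, h⟩ 0 else pe B n or ⟨e, h⟩ (2 * n - 2))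
  else Sym2.map Sum.inl e

lemma phiV_not_mem {v : V} {e : Sym2 V} (h : e ∉ B) :
    phiV B n or v e = Sym2.map Sum.inl e := dif_neg h

lemma phiV_mem_fst {v : V} {e : Sym2 V} (h : e ∈ B) (hu : (or e).1 = v) :
    phiV B n or v e = pe B n or ⟨e, h⟩ 0 := by
  unfold phiV
  rw [dif_pos h, if_pos hu]

lemma phiV_mem_snd {v : V} {e : Sym2 V} (h : e ∈ B) (hu : (or e).1 ≠ v) :
    phiV B n or v e = pe B n or ⟨e, h⟩ (2 * n - 2) := by
  unfold phiV
  rw [dif_pos h, if_neg hu]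

lemma mem_map_inl {v : V} {e : Sym2 V} :
    Sum.inl v ∈ Sym2.map (Sum.inl : V → PVert V B n) e ↔ v ∈ e := by
  rw [Sym2.mem_map]
  constructor
  · rintro ⟨w, hw, h⟩
    rwa [← Sum.inl_injective h]
  · intro h
    exact ⟨v, h, rfl⟩

lemma card_filter_inl (hB2 : ∀ e ∈ B, 2 ≤ n)
    (hne : ∀ e : {e : Sym2 V // e ∈ B}, (or e.1).1 ≠ (or e.1).2)
    (hor : ∀ e, s((or e).1, (or e).2) = e) (M : Finset (Sym2 V)) (v : V) :
    ((phi B n or M).filter (fun a => Sum.inl v ∈ a)).card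
      = (M.filter (fun e => v ∈ e)).card := by
  have hmem : ∀ (e : Sym2 V) (w : V), w ∈ e ↔ w = (or e).1 ∨ w = (or e).2 := by
    intro e w
    conv_lhs => rw [← hor e]
    rw [Sym2.mem_iff]
  refine (Finset.card_bij (fun e _ => phiV B n or v e) ?_ ?_ ?_).symm
  · -- maps into target
    rintro e he
    rw [Finset.mem_filter] at he
    obtain ⟨heM, hev⟩ := he
    rw [Finset.mem_filter]
    beta_reduce
    by_cases hB : e ∈ B
    · have hn := hB2 e hB
      have hcond : ∀ j, j < 2 * n - 1 → Even j →
          pe B n or ⟨e, hB⟩ j ∈ phi B n or M := by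
        intro j hj hev'
        rw [pe_mem_phi hB2 hne hj, if_pos heM]
        exact hev'
      by_cases hu : (or e).1 = v
      · rw [phiV_mem_fst hB hu]
        refine ⟨hcond 0 (by omega) Even.zero, ?_⟩
        rw [mem_pe_inl hn (by omega)]
        exact Or.inl ⟨rfl, hu.symm⟩
      · rw [phiV_mem_snd hB hu]
        refine ⟨hcond (2 * n - 2) (by omega) ⟨n - 1, by omega⟩, ?_⟩
        rw [mem_pe_inl hn (by omega)]
        refine Or.inr ⟨rfl, ?_⟩
        rcases (hmem e v).mp hev with h | h
        · exact absurd h.symm hu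
        · exact h
    · rw [phiV_not_mem hB]
      exact ⟨(map_inl_mem_phi hB2).mpr (Finset.mem_sdiff.mpr ⟨heM, hB⟩),
        mem_map_inl.mpr hev⟩
  · -- injective
    rintro e1 he1 e2 he2 h
    beta_reduce at h
    by_cases h1 : e1 ∈ B <;> by_cases h2 : e2 ∈ B
    · have hn := hB2 e1 h1
      have key : (⟨e1, h1⟩ : {e : Sym2 V // e ∈ B}) = ⟨e2, h2⟩ := by
        by_cases c1 : (or e1).1 = v <;> by_cases c2 : (or e2).1 = v
        · rw [phiV_mem_fst h1 c1, phiV_mem_fst h2 c2] at h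
          exact (pe_inj hn (hne _) (by omega) (by omega) h).1
        · rw [phiV_mem_fst h1 c1, phiV_mem_snd h2 c2] at h
          exact (pe_inj hn (hne _) (by omega) (by omega) h).1
        · rw [phiV_mem_snd h1 c1, phiV_mem_fst h2 c2] at h
          exact (pe_inj hn (hne _) (by omega) (by omega) h).1
        · rw [phiV_mem_snd h1 c1, phiV_mem_snd h2 c2] at h
          exact (pe_inj hn (hne _) (by omega) (by omega) h).1
      exact Subtype.mk.injEq .. ▸ key
    · have hn := hB2 e1 h1
      rw [phiV_not_mem h2] at h
      by_cases c1 : (or e1).1 = v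
      · rw [phiV_mem_fst h1 c1] at h
        exact absurd h (pe_ne_map_inl hn _ (by omega) e2)
      · rw [phiV_mem_snd h1 c1] at h
        exact absurd h (pe_ne_map_inl hn _ (by omega) e2)
    · have hn := hB2 e2 h2
      rw [phiV_not_mem h1] at h
      by_cases c2 : (or e2).1 = v
      · rw [phiV_mem_fst h2 c2] at h
        exact absurd h.symm (pe_ne_map_inl hn _ (by omega) e1)
      · rw [phiV_mem_snd h2 c2] at h
        exact absurd h.symm (pe_ne_map_inl hn _ (by omega) e1)
    · rw [phiV_not_mem h1, phiV_not_mem h2] at h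
      exact Sym2.map.injective Sum.inl_injective h
  · -- surjective
    rintro a ha
    rw [Finset.mem_filter] at ha
    obtain ⟨haphi, hav⟩ := ha
    rcases mem_phi.mp haphi with ⟨e, he, rfl⟩ | ⟨e, j, hj, hcond, rfl⟩
    · rw [Finset.mem_sdiff] at he
      refine ⟨e, Finset.mem_filter.mpr ⟨he.1, mem_map_inl.mp hav⟩, ?_⟩
      beta_reduce
      rw [phiV_not_mem he.2]
    · have hn := hB2 e.1 e.2
      rcases (mem_pe_inl hn hj).mp hav with ⟨rfl, rfl⟩ | ⟨rfl, rfl⟩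
      · have heM : e.1 ∈ M := by
          by_contra hno
          rw [if_neg hno, Nat.odd_iff] at hcond
          omega
        refine ⟨e.1, Finset.mem_filter.mpr ⟨heM, (hmem e.1 _).mpr (Or.inl rfl)⟩, ?_⟩
        beta_reduce
        rw [phiV_mem_fst e.2 rfl, Subtype.coe_eta]
      · have heM : e.1 ∈ M := by
          by_contra hno
          rw [if_neg hno] at hcond
          rw [Nat.odd_iff] at hcond
          omega
        refine ⟨e.1, Finset.mem_filter.mpr ⟨heM, (hmem e.1 _).mpr (Or.inr rfl)⟩, ?_⟩
        beta_reduce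
        rw [phiV_mem_snd e.2 (hne e), Subtype.coe_eta]


lemma card_filter_inr (hB2 : ∀ e ∈ B, 2 ≤ n)
    (hne : ∀ e : {e : Sym2 V // e ∈ B}, (or e.1).1 ≠ (or e.1).2)
    (M : Finset (Sym2 V)) (f : {e : Sym2 V // e ∈ B}) (i : Fin (2 * n - 2)) :
    ((phi B n or M).filter (fun a => Sum.inr (f, i) ∈ a)).card = 1 := by
  have hi := i.2
  have key : ∀ j0 : ℕ, j0 < 2 * n - 1 → (j0 = (i : ℕ) ∨ j0 = (i : ℕ) + 1) →
      (if f.1 ∈ M then Even j0 else Odd j0) →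
      (phi B n or M).filter (fun a => Sum.inr (f, i) ∈ a) = {pe B n or f j0} := by
    intro j0 hj0 hcase hcond
    ext a
    rw [Finset.mem_filter, Finset.mem_singleton]
    constructor
    · rintro ⟨ha, hmem⟩
      rcases mem_phi.mp ha with ⟨e, he, rfl⟩ | ⟨e, j, hj, hc, rfl⟩
      · rw [Sym2.mem_map] at hmem
        obtain ⟨w, -, hw⟩ := hmem
        exact nomatch hw
      · obtain ⟨rfl, hj'⟩ := (mem_pe_inr hj).mp hmem
        have hjj0 : j = j0 := by
          by_cases hM : f.1 ∈ M
          · rw [if_pos hM] at hc hcond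
            rw [Nat.even_iff] at hc hcond
            omega
          · rw [if_neg hM] at hc hcond
            rw [Nat.odd_iff] at hc hcond
            omega
        rw [hjj0]
    · rintro rfl
      exact ⟨(pe_mem_phi hB2 hne hj0).mpr hcond,
        (mem_pe_inr hj0).mpr ⟨rfl, by omega⟩⟩
  by_cases hM : f.1 ∈ M <;> by_cases hEv : Even (i : ℕ)
  · rw [key (i : ℕ) (by omega) (Or.inl rfl) (by rw [if_pos hM]; exact hEv)]
    exact Finset.card_singleton _
  · rw [key ((i : ℕ) + 1) (by omega) (Or.inr rfl)
      (by rw [if_pos hM]; rw [Nat.even_iff] at hEv ⊢; omega)]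
    exact Finset.card_singleton _
  · rw [key ((i : ℕ) + 1) (by omega) (Or.inr rfl)
      (by rw [if_neg hM]; rw [Nat.even_iff] at hEv; rw [Nat.odd_iff]; omega)]
    exact Finset.card_singleton _
  · rw [key (i : ℕ) (by omega) (Or.inl rfl)
      (by rw [if_neg hM]; rw [Nat.even_iff] at hEv; rw [Nat.odd_iff]; omega)]
    exact Finset.card_singleton _

lemma card_even_fin :
    ((Finset.univ : Finset (Fin (2 * n - 1))).filter (fun j : Fin (2 * n - 1) => Even (j : ℕ))).card = n := by
  conv_rhs => rw [← Fintype.card_fin n, ← Finset.card_univ]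
  refine Finset.card_bij (fun (j : Fin (2 * n - 1)) _ => (⟨(j : ℕ) / 2, by have := j.2; omega⟩ : Fin n))
    (fun _ _ => Finset.mem_univ _) ?_ ?_
  · intro j1 hj1 j2 hj2 h
    have h' : (j1 : ℕ) / 2 = (j2 : ℕ) / 2 := congrArg Fin.val h
    rw [Finset.mem_filter, Nat.even_iff] at hj1 hj2
    exact Fin.ext (by omega)
  · intro m _
    refine ⟨⟨2 * (m : ℕ), by have := m.2; omega⟩, ?_, ?_⟩
    · rw [Finset.mem_filter]
      exact ⟨Finset.mem_univ _, ⟨(m : ℕ), by simp only [Fin.val_mk]; omega⟩⟩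
    · apply Fin.ext
      simp only [Fin.val_mk]
      omega

lemma card_subtype_filter (M : Finset (Sym2 V)) :
    ((Finset.univ : Finset {e : Sym2 V // e ∈ B}).filter (fun e => e.1 ∈ M)).card
      = (M ∩ B).card := by
  refine Finset.card_bij (fun e _ => e.1) ?_ ?_ ?_
  · intro e he
    rw [Finset.mem_filter] at he
    exact Finset.mem_inter.mpr ⟨he.2, e.2⟩
  · intro e1 _ e2 _ h
    exact Subtype.ext h
  · intro e he
    rw [Finset.mem_inter] at he
    exact ⟨⟨e, he.2⟩, Finset.mem_filter.mpr ⟨Finset.mem_univ _, he.1⟩, rfl⟩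

variable [Fintype V]

lemma mem_pEdges {G : SimpleGraph V} [DecidableRel G.Adj] {a : Sym2 (PVert V B n)} :
    a ∈ pEdges G B n or ↔
      (∃ e ∈ G.edgeFinset \ B, a = Sym2.map Sum.inl e) ∨
      (∃ (e : {e : Sym2 V // e ∈ B}) (j : ℕ), j < 2 * n - 1 ∧ a = pe B n or e j) := by
  unfold pEdges
  rw [Finset.mem_union, Finset.mem_image, Finset.mem_image]
  constructor
  · rintro (⟨e, he, rfl⟩ | ⟨x, -, rfl⟩)
    · exact Or.inl ⟨e, he, rfl⟩
    · exact Or.inr ⟨x.1, x.2, x.2.2, rfl⟩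
  · rintro (⟨e, he, rfl⟩ | ⟨e, j, hj, rfl⟩)
    · exact Or.inl ⟨e, he, rfl⟩
    · exact Or.inr ⟨(e, ⟨j, hj⟩), Finset.mem_univ _, rfl⟩

lemma mem_pRed {R : Finset (Sym2 V)} {a : Sym2 (PVert V B n)} :
    a ∈ pRed R B n or ↔
      (∃ e ∈ R, a = Sym2.map Sum.inl e) ∨
      (∃ (e : {e : Sym2 V // e ∈ B}) (j : ℕ), j < 2 * n - 1 ∧ Even j ∧ a = pe B n or e j) := by
  unfold pRed
  rw [Finset.mem_union, Finset.mem_image, Finset.mem_image]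
  constructor
  · rintro (⟨e, he, rfl⟩ | ⟨x, hx, rfl⟩)
    · exact Or.inl ⟨e, he, rfl⟩
    · rw [Finset.mem_filter] at hx
      exact Or.inr ⟨x.1, x.2, x.2.2, hx.2, rfl⟩
  · rintro (⟨e, he, rfl⟩ | ⟨e, j, hj, hev, rfl⟩)
    · exact Or.inl ⟨e, he, rfl⟩
    · exact Or.inr ⟨(e, ⟨j, hj⟩), Finset.mem_filter.mpr ⟨Finset.mem_univ _, hev⟩, rfl⟩

lemma phi_subset {G : SimpleGraph V} [DecidableRel G.Adj] {M : Finset (Sym2 V)}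
    (hME : M ⊆ G.edgeFinset) : phi B n or M ⊆ pEdges G B n or := by
  intro a ha
  rcases mem_phi.mp ha with ⟨e, he, rfl⟩ | ⟨e, j, hj, -, rfl⟩
  · rw [Finset.mem_sdiff] at he
    exact mem_pEdges.mpr (Or.inl ⟨e, Finset.mem_sdiff.mpr ⟨hME he.1, he.2⟩, rfl⟩)
  · exact mem_pEdges.mpr (Or.inr ⟨e, j, hj, rfl⟩)


lemma card_inter_pRed (hB2 : ∀ e ∈ B, 2 ≤ n)
    (hne : ∀ e : {e : Sym2 V // e ∈ B}, (or e.1).1 ≠ (or e.1).2)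
    {R : Finset (Sym2 V)} (hdisj : Disjoint R B) (M : Finset (Sym2 V)) :
    ((phi B n or M) ∩ pRed R B n or).card = (M ∩ R).card + (M ∩ B).card * n := by
  have hset : (phi B n or M) ∩ pRed R B n or =
      (M ∩ R).image (Sym2.map Sum.inl) ∪
      ((Finset.univ : Finset ({e : Sym2 V // e ∈ B} × Fin (2 * n - 1))).filter
          (fun x => x.1.1 ∈ M ∧ Even (x.2 : ℕ))).image
        (fun x => pe B n or x.1 (x.2 : ℕ)) := by
    ext a
    rw [Finset.mem_inter, Finset.mem_union, Finset.mem_image, Finset.mem_image]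
    constructor
    · rintro ⟨h1, h2⟩
      rcases mem_phi.mp h1 with ⟨e, he, rfl⟩ | ⟨e, j, hj, hc, rfl⟩
      · rcases mem_pRed.mp h2 with ⟨e', he', heq⟩ | ⟨e', j', hj', -, heq⟩
        · rw [Sym2.map.injective Sum.inl_injective heq] at he ⊢
          rw [Finset.mem_sdiff] at he
          exact Or.inl ⟨e', Finset.mem_inter.mpr ⟨he.1, he'⟩, rfl⟩
        · exact absurd heq.symm (pe_ne_map_inl (hB2 e'.1 e'.2) e' hj' e)
      · rcases mem_pRed.mp h2 with ⟨e', -, heq⟩ | ⟨e', j', hj', hev, heq⟩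
        · exact absurd heq (pe_ne_map_inl (hB2 e.1 e.2) e hj e')
        · obtain ⟨rfl, rfl⟩ := pe_inj (hB2 e.1 e.2) (hne e) hj hj' heq
          have heM : e.1 ∈ M := by
            by_contra hno
            rw [if_neg hno, Nat.odd_iff] at hc
            rw [Nat.even_iff] at hev
            omega
          refine Or.inr ⟨(e, ⟨j, hj⟩), ?_, rfl⟩
          rw [Finset.mem_filter]
          exact ⟨Finset.mem_univ _, heM, hev⟩
    · rintro (⟨e, he, rfl⟩ | ⟨x, hx, rfl⟩)
      · rw [Finset.mem_inter] at he
        have heB : e ∉ B := fun hB => (Finset.disjoint_left.mp hdisj he.2) hB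
        exact ⟨(map_inl_mem_phi hB2).mpr (Finset.mem_sdiff.mpr ⟨he.1, heB⟩),
          mem_pRed.mpr (Or.inl ⟨e, he.2, rfl⟩)⟩
      · rw [Finset.mem_filter] at hx
        obtain ⟨-, hxM, hxev⟩ := hx
        refine ⟨?_, mem_pRed.mpr (Or.inr ⟨x.1, x.2, x.2.2, hxev, rfl⟩)⟩
        rw [pe_mem_phi hB2 hne x.2.2, if_pos hxM]
        exact hxev
  rw [hset]
  rw [Finset.card_union_of_disjoint, Finset.card_image_of_injective _
    (Sym2.map.injective Sum.inl_injective)]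
  · congr 1
    rw [Finset.card_image_of_injOn]
    · have : ((Finset.univ : Finset ({e : Sym2 V // e ∈ B} × Fin (2 * n - 1))).filter
          (fun x => x.1.1 ∈ M ∧ Even (x.2 : ℕ)))
          = ((Finset.univ : Finset {e : Sym2 V // e ∈ B}).filter (fun e => e.1 ∈ M)) ×ˢ
            ((Finset.univ : Finset (Fin (2 * n - 1))).filter (fun j : Fin (2 * n - 1) => Even (j : ℕ))) := by
        rw [← Finset.filter_product, Finset.univ_product_univ]
      rw [this, Finset.card_product, card_subtype_filter, card_even_fin]
    · intro x hx y hy h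
      obtain ⟨h1, h2⟩ := pe_inj (hB2 x.1.1 x.1.2) (hne x.1) x.2.2 y.2.2 h
      exact Prod.ext h1 (Fin.ext h2)
  · rw [Finset.disjoint_left]
    rintro a ha ha'
    rw [Finset.mem_image] at ha ha'
    obtain ⟨e, -, rfl⟩ := ha
    obtain ⟨x, -, hx⟩ := ha'
    exact pe_ne_map_inl (hB2 x.1.1 x.1.2) x.1 x.2.2 e hx


variable (B n or) in
noncomputable def backM (G : SimpleGraph V) [DecidableRel G.Adj]
    (M' : Finset (Sym2 (PVert V B n))) : Finset (Sym2 V) :=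
  @Finset.filter _
    (fun e => if h : e ∈ B then pe B n or ⟨e, h⟩ 0 ∈ M'
              else Sym2.map Sum.inl e ∈ M') (Classical.decPred _) G.edgeFinset

lemma mem_backM {G : SimpleGraph V} [DecidableRel G.Adj]
    {M' : Finset (Sym2 (PVert V B n))} {e : Sym2 V} :
    e ∈ backM B n or G M' ↔ e ∈ G.edgeFinset ∧
      (if h : e ∈ B then pe B n or ⟨e, h⟩ 0 ∈ M' else Sym2.map Sum.inl e ∈ M') := by
  unfold backM
  exact @Finset.mem_filter _ _ (Classical.decPred _) _ _

lemma backM_subset {G : SimpleGraph V} [DecidableRel G.Adj]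
    {M' : Finset (Sym2 (PVert V B n))} : backM B n or G M' ⊆ G.edgeFinset :=
  @Finset.filter_subset _ _ (Classical.decPred _) _

lemma phi_eq {G : SimpleGraph V} [DecidableRel G.Adj]
    (hB2 : ∀ e ∈ B, 2 ≤ n)
    (hne : ∀ e : {e : Sym2 V // e ∈ B}, (or e.1).1 ≠ (or e.1).2)
    (hBE : B ⊆ G.edgeFinset)
    {M' : Finset (Sym2 (PVert V B n))} (hsub : M' ⊆ pEdges G B n or)
    (hpm : ∀ u : PVert V B n, (M'.filter (fun a => u ∈ a)).card = 1) :
    M' = phi B n or (backM B n or G M') := by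
  set M := backM B n or G M' with hMdef
  have alt : ∀ (e : {e : Sym2 V // e ∈ B}) (j : ℕ), j < 2 * n - 1 →
      (pe B n or e j ∈ M' ↔ (Even j ↔ pe B n or e 0 ∈ M')) := by
    intro e j
    induction j with
    | zero =>
      intro _
      simp only [Even.zero, true_iff]
    | succ j ih =>
      intro hj
      have hn := hB2 e.1 e.2
      have hj' : j < 2 * n - 1 := by omega
      have hIH := ih hj'
      have hjlt : j < 2 * n - 2 := by omega
      obtain ⟨a, hfil⟩ := Finset.card_eq_one.mp
        (hpm (Sum.inr (e, (⟨j, hjlt⟩ : Fin (2 * n - 2)))))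
      have hmem_a : a ∈ M' ∧ Sum.inr (e, (⟨j, hjlt⟩ : Fin (2 * n - 2))) ∈ a := by
        have : a ∈ M'.filter
            (fun x => Sum.inr (e, (⟨j, hjlt⟩ : Fin (2 * n - 2))) ∈ x) := by
          rw [hfil]; exact Finset.mem_singleton_self a
        exact Finset.mem_filter.mp this
      have hone : ∀ x ∈ M', Sum.inr (e, (⟨j, hjlt⟩ : Fin (2 * n - 2))) ∈ x → x = a := by
        intro x hx hmx
        have : x ∈ M'.filter
            (fun y => Sum.inr (e, (⟨j, hjlt⟩ : Fin (2 * n - 2))) ∈ y) :=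
          Finset.mem_filter.mpr ⟨hx, hmx⟩
        rw [hfil] at this
        exact Finset.mem_singleton.mp this
      have hacase : a = pe B n or e j ∨ a = pe B n or e (j + 1) := by
        rcases mem_pEdges.mp (hsub hmem_a.1) with ⟨e', he', rfl⟩ | ⟨e', j', hj'', rfl⟩
        · rw [Sym2.mem_map] at hmem_a
          obtain ⟨-, ⟨w, -, hw⟩⟩ := hmem_a
          exact nomatch hw
        · obtain ⟨rfl, hcc⟩ := (mem_pe_inr hj'').mp hmem_a.2
          simp only [Fin.val_mk] at hcc
          rcases hcc with h | h
          · subst h; exact Or.inl rfl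
          · subst h; exact Or.inr rfl
      have m1 : Sum.inr (e, (⟨j, hjlt⟩ : Fin (2 * n - 2))) ∈ pe B n or e j :=
        (mem_pe_inr hj').mpr ⟨rfl, Or.inl rfl⟩
      have m2 : Sum.inr (e, (⟨j, hjlt⟩ : Fin (2 * n - 2))) ∈ pe B n or e (j + 1) :=
        (mem_pe_inr hj).mpr ⟨rfl, Or.inr rfl⟩
      have hnotboth : ¬(pe B n or e j ∈ M' ∧ pe B n or e (j + 1) ∈ M') := by
        rintro ⟨h1, h2⟩
        have e1 := hone _ h1 m1
        have e2 := hone _ h2 m2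
        rw [← e2] at e1
        have := (pe_inj hn (hne e) hj' hj e1).2
        omega
      have hor' : pe B n or e j ∈ M' ∨ pe B n or e (j + 1) ∈ M' := by
        rcases hacase with rfl | rfl
        · exact Or.inl hmem_a.1
        · exact Or.inr hmem_a.1
      rw [Nat.even_add_one]
      constructor
      · intro h2
        have h1 : pe B n or e j ∉ M' := fun h1 => hnotboth ⟨h1, h2⟩
        rw [hIH] at h1
        tauto
      · intro hiff
        rcases hor' with h1 | h2
        · rw [hIH] at h1
          tauto
        · exact h2
  have hMiff : ∀ e : {e : Sym2 V // e ∈ B}, (e.1 ∈ M ↔ pe B n or e 0 ∈ M') := by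
    intro e
    rw [hMdef, mem_backM]
    constructor
    · rintro ⟨-, h⟩
      rw [dif_pos e.2, Subtype.coe_eta] at h
      exact h
    · intro h
      refine ⟨hBE e.2, ?_⟩
      rw [dif_pos e.2, Subtype.coe_eta]
      exact h
  ext a
  constructor
  · intro ha
    rcases mem_pEdges.mp (hsub ha) with ⟨e, he, rfl⟩ | ⟨e, j, hj, rfl⟩
    · rw [Finset.mem_sdiff] at he
      apply (map_inl_mem_phi hB2).mpr
      rw [Finset.mem_sdiff]
      refine ⟨?_, he.2⟩
      rw [hMdef, mem_backM]
      refine ⟨he.1, ?_⟩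
      rw [dif_neg he.2]
      exact ha
    · rw [pe_mem_phi hB2 hne hj]
      have ht := (alt e j hj).mp ha
      split_ifs with hMe
      · rw [hMiff e] at hMe
        tauto
      · rw [hMiff e] at hMe
        rw [← Nat.not_even_iff_odd]
        tauto
  · intro ha
    rcases mem_phi.mp ha with ⟨e, he, rfl⟩ | ⟨e, j, hj, hc, rfl⟩
    · obtain ⟨heM, heB⟩ := Finset.mem_sdiff.mp he
      rw [hMdef, mem_backM] at heM
      have := heM.2
      rw [dif_neg heB] at this
      exact this
    · apply (alt e j hj).mpr
      split_ifs at hc with hMe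
      · rw [hMiff e] at hMe
        tauto
      · rw [hMiff e] at hMe
        rw [← Nat.not_even_iff_odd] at hc
        tauto

lemma card_mem_filter_eq_two {e : Sym2 V} (hd : ¬ e.IsDiag) :
    ((Finset.univ : Finset V).filter (fun v => v ∈ e)).card = 2 := by
  induction e with
  | _ x y =>
    rw [Sym2.mk_isDiag_iff] at hd
    have hset : (Finset.univ : Finset V).filter (fun v => v ∈ s(x, y)) = {x, y} := by
      ext v
      simp [Sym2.mem_iff]
    rw [hset, Finset.card_insert_of_notMem (by simp [hd]), Finset.card_singleton]

lemma two_mul_card_pm {G : SimpleGraph V} [DecidableRel G.Adj] {M : Finset (Sym2 V)}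
    (hME : M ⊆ G.edgeFinset)
    (hpm : ∀ v : V, (M.filter (fun e => v ∈ e)).card = 1) :
    2 * M.card = Fintype.card V := by
  have key : ∑ v : V, (M.filter (fun e => v ∈ e)).card = ∑ _e ∈ M, 2 := by
    calc ∑ v : V, (M.filter (fun e => v ∈ e)).card
        = ∑ v : V, ∑ e ∈ M, if v ∈ e then 1 else 0 := by
          refine Finset.sum_congr rfl fun v _ => ?_
          rw [Finset.card_filter]
      _ = ∑ e ∈ M, ∑ v : V, if v ∈ e then 1 else 0 := Finset.sum_comm
      _ = ∑ e ∈ M, 2 := by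
          refine Finset.sum_congr rfl fun e he => ?_
          rw [← Finset.card_filter]
          exact card_mem_filter_eq_two
            (SimpleGraph.not_isDiag_of_mem_edgeSet G
              (SimpleGraph.mem_edgeFinset.mp (hME he)))
  have h1 : ∑ v : V, (M.filter (fun e => v ∈ e)).card = Fintype.card V := by
    rw [Finset.sum_congr rfl fun v _ => hpm v]
    simp
  rw [h1] at key
  rw [Finset.sum_const, smul_eq_mul] at key
  omega

end Aux

/-- for `k, ℓ < n`, `G` has a perfect matching with exactly `k` red and
exactly `ℓ` blue edges iff `G′` (each blue edge replaced by an alternately-colored path of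
length `2n − 1` starting and ending with a red edge) has a perfect matching with exactly
`ℓ·n + k` red edges. -/


theorem stmt7 {V : Type} [Fintype V] [DecidableEq V] (G : SimpleGraph V)
    [DecidableRel G.Adj] (R B : Finset (Sym2 V))
    (hRE : R ⊆ G.edgeFinset) (hBE : B ⊆ G.edgeFinset) (hdisj : Disjoint R B)
    (or : Sym2 V → V × V) (hor : ∀ e, s((or e).1, (or e).2) = e)
    (k ℓ : ℕ) (hk : k < Fintype.card V) (hℓ : ℓ < Fintype.card V) :
    (∃ M : Finset (Sym2 V), M ⊆ G.edgeFinset ∧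
        (∀ v : V, (M.filter (fun e => v ∈ e)).card = 1) ∧
        (M ∩ R).card = k ∧ (M ∩ B).card = ℓ)
    ↔ (∃ M : Finset (Sym2 (PVert V B (Fintype.card V))),
        M ⊆ pEdges G B (Fintype.card V) or ∧
        (∀ u : PVert V B (Fintype.card V), (M.filter (fun e => u ∈ e)).card = 1) ∧
        (M ∩ pRed R B (Fintype.card V) or).card = ℓ * Fintype.card V + k) := by
  have hne : ∀ e : {e : Sym2 V // e ∈ B}, (or e.1).1 ≠ (or e.1).2 := by
    intro e
    have hmem : s((or e.1).1, (or e.1).2) ∈ G.edgeSet := by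
      rw [hor e.1]
      exact SimpleGraph.mem_edgeFinset.mp (hBE e.2)
    exact ((SimpleGraph.mem_edgeSet G).mp hmem).ne
  have hB2 : ∀ e ∈ B, 2 ≤ Fintype.card V := by
    intro e he
    have hmem : s((or e).1, (or e).2) ∈ G.edgeSet := by
      rw [hor e]
      exact SimpleGraph.mem_edgeFinset.mp (hBE he)
    exact Fintype.one_lt_card_iff.mpr ⟨_, _, ((SimpleGraph.mem_edgeSet G).mp hmem).ne⟩
  constructor
  · rintro ⟨M, hME, hpm, hkR, hlB⟩
    refine ⟨phi B (Fintype.card V) or M, phi_subset hME, ?_, ?_⟩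
    · rintro (v | ⟨f, i⟩)
      · rw [card_filter_inl hB2 hne hor M v]
        exact hpm v
      · exact card_filter_inr hB2 hne M f i
    · rw [card_inter_pRed hB2 hne hdisj M, hkR, hlB, Nat.add_comm]
  · rintro ⟨M', hsub, hpm, hred⟩
    have hMeq := phi_eq hB2 hne hBE hsub hpm
    set M := backM B (Fintype.card V) or G M' with hMdef
    have hME : M ⊆ G.edgeFinset := backM_subset
    have hpmM : ∀ v : V, (M.filter (fun e => v ∈ e)).card = 1 := by
      intro v
      rw [← card_filter_inl hB2 hne hor M v, ← hMeq]
      exact hpm (Sum.inl v)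
    have hcount : (M ∩ R).card + (M ∩ B).card * Fintype.card V
        = ℓ * Fintype.card V + k := by
      rw [← card_inter_pRed hB2 hne hdisj M, ← hMeq]
      exact hred
    have h2 : 2 * M.card = Fintype.card V := two_mul_card_pm hME hpmM
    have hRlt : (M ∩ R).card < Fintype.card V := by
      have h3 : (M ∩ R).card ≤ M.card := Finset.card_le_card Finset.inter_subset_left
      omega
    have hr : (M ∩ R).card = k := by
      have e1 : ((M ∩ R).card + (M ∩ B).card * Fintype.card V) % Fintype.card V
          = (M ∩ R).card % Fintype.card V := Nat.add_mul_mod_self_right _ _ _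
      have e2 : (ℓ * Fintype.card V + k) % Fintype.card V = k % Fintype.card V := by
        rw [Nat.add_comm]
        exact Nat.add_mul_mod_self_right _ _ _
      rw [hcount] at e1
      have e3 := e1.symm.trans e2
      rwa [Nat.mod_eq_of_lt hRlt, Nat.mod_eq_of_lt hk] at e3
    have hb : (M ∩ B).card = ℓ := by
      rw [hr] at hcount
      rw [Nat.add_comm (ℓ * Fintype.card V) k] at hcount
      have h4 := Nat.add_left_cancel hcount
      exact Nat.eq_of_mul_eq_mul_right (by omega) h4
    exact ⟨M, hME, hpmM, hr, hb⟩
end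

section
/- Let D = (V, A) be a digraph with |V| ≥ 2, let p be a new candidate not in V, and let C = V ∪ {p}. For each arc (a, b) ∈ A let the corresponding First-Last vote on C be the pair (b, a) (ranking b first and a last). Then for every k ∈ ℕ, there exists a subset S ⊆ A with |S| = k such that p is a First-Last winner of the multiset of votes {(b, a) : (a, b) ∈ S}, if and only if D contains a family of pairwise arc-disjoint cycles of total length exactly k. -/
/-- The First-Last score of candidate `c` in a multiset of First-Last votes:
the number of votes ranking `c` first minus the number ranking `c` last. -/
def flScore {C : Type} [DecidableEq C] (V : Multiset (C × C)) (c : C) : ℤ :=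
  ((V.filter (fun v => v.1 = c)).card : ℤ) - ((V.filter (fun v => v.2 = c)).card : ℤ)

/-- `c` is a First-Last winner of `V` if its score is at least that of every candidate. -/
def flWinner {C : Type} [Fintype C] [DecidableEq C] (V : Multiset (C × C)) (c : C) : Prop :=
  ∀ d : C, flScore V d ≤ flScore V c

/-- The arcs traversed by a cycle given as a list of vertices `[v₁, …, vₜ]`:
the pairs `(v₁,v₂), …, (vₜ₋₁,vₜ), (vₜ,v₁)`. -/
def cycArcs {V : Type} (c : List V) : List (V × V) := c.zip (c.rotate 1)

/-- `c` is a cycle in the digraph with arc set `A`. -/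
def IsCycle {V : Type} (A : Set (V × V)) (c : List V) : Prop :=
  2 ≤ c.length ∧ c.Nodup ∧ ∀ a ∈ cycArcs c, a ∈ A

/-- A family of pairwise arc-disjoint cycles of `A` of total length `k`. -/
def ADisjCycleFamily {V : Type} (A : Set (V × V)) (F : List (List V)) (k : ℕ) : Prop :=
  (∀ c ∈ F, IsCycle A c) ∧
    F.Pairwise (fun c d => ∀ a ∈ cycArcs c, a ∉ cycArcs d) ∧
    (F.map List.length).sum = k

section Aux

set_option linter.unusedSectionVars false
set_option linter.unusedVariables false

variable {V : Type} [DecidableEq V] [Fintype V]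

lemma length_cycArcs (c : List V) : (cycArcs c).length = c.length := by
  simp [cycArcs]

lemma map_fst_cycArcs (c : List V) : (cycArcs c).map Prod.fst = c := by
  apply List.map_fst_zip; simp

lemma map_snd_cycArcs (c : List V) : (cycArcs c).map Prod.snd = c.rotate 1 := by
  apply List.map_snd_zip; simp

lemma nodup_cycArcs {c : List V} (h : c.Nodup) : (cycArcs c).Nodup := by
  have h' : ((cycArcs c).map Prod.fst).Nodup := by rw [map_fst_cycArcs]; exact h
  exact List.Nodup.of_map Prod.fst h'

/-- Cycle balance: a list of cyclic arcs has equal in/out counts at every vertex. -/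
lemma countP_cycArcs (c : List V) (v : V) :
    (cycArcs c).countP (fun a => a.2 = v) = (cycArcs c).countP (fun a => a.1 = v) := by
  have h1 : ((cycArcs c).map Prod.fst).countP (fun x => x = v)
      = c.countP (fun x => x = v) := by rw [map_fst_cycArcs]
  have h2 : ((cycArcs c).map Prod.snd).countP (fun x => x = v)
      = (c.rotate 1).countP (fun x => x = v) := by rw [map_snd_cycArcs]
  rw [List.countP_map] at h1 h2
  have e1 : ((fun x => decide (x = v)) ∘ Prod.fst) = (fun a : V × V => decide (a.1 = v)) := rfl
  have e2 : ((fun x => decide (x = v)) ∘ Prod.snd) = (fun a : V × V => decide (a.2 = v)) := rfl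
  rw [e1] at h1
  rw [e2] at h2
  rw [h1, h2, (List.rotate_perm c 1).countP_eq]

lemma chain'_zip_tail {R : V → V → Prop} : ∀ {l : List V}, List.Chain' R l →
    ∀ a ∈ l.zip l.tail, R a.1 a.2 := by
  intro l
  induction l with
  | nil => intro _ a ha; simp at ha
  | cons x t ih =>
    intro h a ha
    cases t with
    | nil => simp at ha
    | cons y s =>
      simp only [List.tail_cons, List.zip_cons_cons, List.mem_cons] at ha
      rcases ha with rfl | ha
      · exact h.rel_head
      · exact ih h.tail a ha

lemma zip_append_singleton (e : V) : ∀ (c : List V) (x : V),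
    (x :: c).zip (c ++ [e]) = (x :: c).zip c ++ [((x :: c).getLast (List.cons_ne_nil x c), e)]
  | [], x => by simp
  | y :: t, x => by
    simp only [List.cons_append, List.zip_cons_cons, zip_append_singleton e t y]
    simp [List.getLast]

lemma cycArcs_cons (x : V) (c : List V) :
    cycArcs (x :: c) = (x :: c).zip c ++ [((x :: c).getLast (List.cons_ne_nil x c), x)] := by
  rw [cycArcs, List.rotate_eq_drop_append_take (by simp)]
  simpa using zip_append_singleton x c x

lemma cycArcs_rel {R : V → V → Prop} {c : List V} (hne : c ≠ [])
    (hch : List.Chain' R c) (hcl : R (c.getLast hne) (c.head hne)) :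
    ∀ a ∈ cycArcs c, R a.1 a.2 := by
  obtain ⟨x, t, rfl⟩ := List.exists_cons_of_ne_nil hne
  rw [cycArcs_cons]
  intro a ha
  rcases List.mem_append.1 ha with ha | ha
  · exact chain'_zip_tail hch a ha
  · simp at ha; subst ha; exact hcl

/-- in-degree of `v` in the arc set `S`. -/
def indeg (S : Finset (V × V)) (v : V) : ℕ := (S.filter (fun a => a.2 = v)).card

/-- out-degree of `v` in the arc set `S`. -/
def outdeg (S : Finset (V × V)) (v : V) : ℕ := (S.filter (fun a => a.1 = v)).card

lemma extend_or_cycle {S : Finset (V × V)} (hbal : ∀ v, indeg S v = outdeg S v)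
    (hloop : ∀ a ∈ S, a.1 ≠ a.2) {l : List V} (hnd : l.Nodup)
    (hch : List.Chain' (fun x y => (x, y) ∈ S) l) (hlen : 2 ≤ l.length) :
    (∃ c, IsCycle (↑S : Set (V × V)) c) ∨
      ∃ l', l'.Nodup ∧ List.Chain' (fun x y => (x, y) ∈ S) l' ∧ 2 ≤ l'.length ∧
        l'.length = l.length + 1 := by
  have hne : l ≠ [] := by intro h; simp [h] at hlen
  set n := l.length with hn
  set t := l.getLast hne with ht
  have harc : (l.get ⟨n - 2, by omega⟩, t) ∈ S := by
    have : (l.get ⟨n - 2, by omega⟩, l.get ⟨n - 2 + 1, by omega⟩) ∈ S :=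
      List.isChain_iff_getElem.1 hch (n - 2) (by omega)
    have hgl : l.get ⟨n - 2 + 1, by omega⟩ = t := by
      rw [ht, List.getLast_eq_getElem]
      simp only [List.get_eq_getElem]
      congr 1
      omega
    rwa [hgl] at this
  have hin : 0 < indeg S t :=
    Finset.card_pos.2 ⟨_, Finset.mem_filter.2 ⟨harc, rfl⟩⟩
  have hout : 0 < outdeg S t := by rw [← hbal]; exact hin
  obtain ⟨a, ha⟩ := Finset.card_pos.1 hout
  obtain ⟨haS, hat⟩ := Finset.mem_filter.1 ha
  set w := a.2 with hw
  have htw : (t, w) ∈ S := by rw [← hat]; exact haS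
  have hwt : w ≠ t := fun h => hloop a haS (by rw [hat, ← h])
  by_cases hwl : w ∈ l
  · left
    obtain ⟨i, hgi⟩ := List.mem_iff_get.1 hwl
    have hint : i.1 ≠ n - 1 := by
      intro h
      apply hwt
      rw [← hgi, ht, List.getLast_eq_getElem]
      simp only [List.get_eq_getElem]
      congr 1
    have hilt : i.1 < n - 1 := by have := i.2; omega
    refine ⟨l.drop i.1, ?_, ?_, ?_⟩
    · rw [List.length_drop]; omega
    · exact (List.drop_sublist i.1 l).nodup hnd
    · have hdne : l.drop i.1 ≠ [] := by
        intro h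
        have := congrArg List.length h
        simp at this; omega
      have hhead : (l.drop i.1).head hdne = w := by
        rw [List.head_drop]
        rw [← hgi]; simp [List.get_eq_getElem]
      have hlast : (l.drop i.1).getLast hdne = t := by rw [List.getLast_drop]
      intro a ha
      exact cycArcs_rel hdne (hch.drop i.1) (by rw [hhead, hlast]; exact htw) a ha
  · right
    refine ⟨l ++ [w], ?_, ?_, ?_, ?_⟩
    · rw [List.nodup_append]
      exact ⟨hnd, List.nodup_singleton w, by intro x hx y hy hxy; simp at hy; subst hy; exact hwl (hxy ▸ hx)⟩
    · refine hch.append (List.isChain_singleton w) ?_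
      intro x hx y hy
      rw [List.getLast?_eq_getLast hne] at hx
      simp at hx hy
      subst hx; subst hy; exact htw
    · simp; omega
    · simp [hn]

lemma exists_cycle {S : Finset (V × V)} (hbal : ∀ v, indeg S v = outdeg S v)
    (hloop : ∀ a ∈ S, a.1 ≠ a.2) (hne : S.Nonempty) :
    ∃ c, IsCycle (↑S : Set (V × V)) c := by
  by_contra hno
  push_neg at hno
  have key : ∀ m : ℕ, 2 ≤ m → ∃ l : List V, l.Nodup ∧
      List.Chain' (fun x y => (x, y) ∈ S) l ∧ 2 ≤ l.length ∧ l.length = m := by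
    intro m hm
    induction m with
    | zero => omega
    | succ m ih =>
      rcases Nat.lt_or_ge m 2 with hm2 | hm2
      · have : m = 1 := by omega
        subst this
        obtain ⟨a, haS⟩ := hne
        refine ⟨[a.1, a.2], ?_, ?_, by simp, by simp⟩
        · simp [hloop a haS]
        · simp [List.Chain', List.isChain_cons_cons]; exact haS
      · obtain ⟨l, hnd, hch, hlen, hleq⟩ := ih hm2
        rcases extend_or_cycle hbal hloop hnd hch hlen with ⟨c, hc⟩ | ⟨l', h1, h2, h3, h4⟩
        · exact absurd hc (hno c)
        · exact ⟨l', h1, h2, h3, by omega⟩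
  obtain ⟨l, hnd, _, _, hlen⟩ := key (Fintype.card V + 1) (by
    obtain ⟨a, haS⟩ := hne
    have h1 : a.1 ≠ a.2 := hloop a haS
    have h2 : 1 ≤ Fintype.card V := Fintype.card_pos_iff.2 ⟨a.1⟩
    omega)
  have := hnd.length_le_card
  omega

lemma toFinset_filter_card {l : List (V × V)} (h : l.Nodup)
    (p : V × V → Prop) [DecidablePred p] :
    (l.toFinset.filter p).card = l.countP (fun a => decide (p a)) := by
  have e : Finset.filter p l.toFinset
      = Finset.filter (fun x => (fun a => decide (p a)) x = true) l.toFinset := by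
    apply Finset.filter_congr; intro x _; simp
  rw [e, ← List.toFinset_filter,
    List.toFinset_card_of_nodup (h.filter _), List.countP_eq_length_filter]

lemma filter_sdiff' (S T : Finset (V × V)) (p : V × V → Prop) [DecidablePred p] :
    (S \ T).filter p = S.filter p \ T.filter p := by
  ext a
  simp only [Finset.mem_filter, Finset.mem_sdiff]
  tauto

/-- Every balanced loop-free arc set decomposes into arc-disjoint cycles. -/
lemma decomp : ∀ (n : ℕ) (S : Finset (V × V)), S.card = n →
    (∀ a ∈ S, a.1 ≠ a.2) → (∀ v, indeg S v = outdeg S v) →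
    ∃ F, ADisjCycleFamily (↑S : Set (V × V)) F n := by
  intro n
  induction n using Nat.strong_induction_on with
  | _ n ih =>
    intro S hcard hloop hbal
    rcases Finset.eq_empty_or_nonempty S with rfl | hne
    · exact ⟨[], by simp, by simp, by simp [← hcard]⟩
    · obtain ⟨c, hc⟩ := exists_cycle hbal hloop hne
      obtain ⟨hclen, hcnd, hcarcs⟩ := hc
      set T : Finset (V × V) := (cycArcs c).toFinset with hT
      have hTS : T ⊆ S := by
        intro a ha
        rw [hT, List.mem_toFinset] at ha
        exact hcarcs a ha
      have hTcard : T.card = c.length := by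
        rw [hT, List.toFinset_card_of_nodup (nodup_cycArcs hcnd), length_cycArcs]
      have hclen_le : c.length ≤ n := by
        rw [← hTcard, ← hcard]; exact Finset.card_le_card hTS
      have hTdeg : ∀ v, indeg T v = outdeg T v := by
        intro v
        rw [indeg, outdeg, hT,
          toFinset_filter_card (nodup_cycArcs hcnd) (fun a => a.2 = v),
          toFinset_filter_card (nodup_cycArcs hcnd) (fun a => a.1 = v)]
        exact countP_cycArcs c v
      set S' := S \ T with hS'
      have hS'card : S'.card = n - c.length := by
        rw [hS', Finset.card_sdiff_of_subset hTS, hcard, hTcard]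
      have hS'loop : ∀ a ∈ S', a.1 ≠ a.2 := fun a ha =>
        hloop a (Finset.mem_sdiff.1 ha).1
      have hS'bal : ∀ v, indeg S' v = outdeg S' v := by
        intro v
        rw [indeg, outdeg, hS', filter_sdiff', filter_sdiff',
          Finset.card_sdiff_of_subset (Finset.filter_subset_filter _ hTS),
          Finset.card_sdiff_of_subset (Finset.filter_subset_filter _ hTS)]
        have h1 := hbal v
        have h2 := hTdeg v
        rw [indeg, outdeg] at h1 h2
        omega
      obtain ⟨F', hF'cyc, hF'pw, hF'sum⟩ :=
        ih (n - c.length) (by omega) S' hS'card hS'loop hS'bal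
      refine ⟨c :: F', ?_, ?_, ?_⟩
      · intro d hd
        rcases List.mem_cons.1 hd with rfl | hd
        · exact ⟨hclen, hcnd, hcarcs⟩
        · obtain ⟨h1, h2, h3⟩ := hF'cyc d hd
          exact ⟨h1, h2, fun a ha => (Finset.mem_sdiff.1 (h3 a ha)).1⟩
      · refine List.Pairwise.cons ?_ hF'pw
        intro d hd a hac had
        have : a ∈ (↑S' : Set (V × V)) := (hF'cyc d hd).2.2 a had
        exact (Finset.mem_sdiff.1 this).2 (by rw [hT, List.mem_toFinset]; exact hac)
      · simp only [List.map_cons, List.sum_cons, hF'sum]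
        omega

lemma flScore_none (S : Finset (V × V)) :
    flScore (S.val.map (fun a => ((some a.2 : Option V), (some a.1 : Option V)))) none = 0 := by
  simp [flScore, Multiset.filter_map, Function.comp]

lemma flScore_some (S : Finset (V × V)) (v : V) :
    flScore (S.val.map (fun a => ((some a.2 : Option V), (some a.1 : Option V)))) (some v)
      = (indeg S v : ℤ) - (outdeg S v : ℤ) := by
  unfold flScore indeg outdeg
  rw [Multiset.filter_map, Multiset.filter_map, Multiset.card_map, Multiset.card_map]
  congr 2
  · rw [Finset.card_def, Finset.filter_val]
    congr 1
    apply Multiset.filter_congr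
    intro x _
    simp [Function.comp]
  · rw [Finset.card_def, Finset.filter_val]
    congr 1
    apply Multiset.filter_congr
    intro x _
    simp [Function.comp]

lemma sum_indeg (S : Finset (V × V)) : ∑ v, indeg S v = S.card :=
  (Finset.card_eq_sum_card_fiberwise (f := Prod.snd) (t := Finset.univ)
    (fun x _ => Finset.mem_univ _)).symm

lemma sum_outdeg (S : Finset (V × V)) : ∑ v, outdeg S v = S.card :=
  (Finset.card_eq_sum_card_fiberwise (f := Prod.fst) (t := Finset.univ)
    (fun x _ => Finset.mem_univ _)).symm

end Aux

/-- with candidates `Option V` (the new preferred candidate `p` being `none`),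
and a vote `(some b, some a)` for each arc `(a,b)`, there is a `k`-element set of arcs whose
corresponding votes make `p` a First-Last winner iff the digraph has pairwise arc-disjoint
cycles of total length exactly `k`. -/
theorem stmt9 {V : Type} [Fintype V] [DecidableEq V]
    (A : Finset (V × V)) (hA : ∀ a ∈ A, a.1 ≠ a.2) (hV : 2 ≤ Fintype.card V) (k : ℕ) :
    (∃ S ⊆ A, S.card = k ∧
        flWinner (S.val.map (fun a => ((some a.2 : Option V), (some a.1 : Option V)))) none)
    ↔ ∃ F : List (List V), ADisjCycleFamily (↑A : Set (V × V)) F k := by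
  constructor
  · rintro ⟨S, hSA, hSk, hwin⟩
    have hloop : ∀ a ∈ S, a.1 ≠ a.2 := fun a ha => hA a (hSA ha)
    have hle : ∀ v, indeg S v ≤ outdeg S v := by
      intro v
      have h := hwin (some v)
      rw [flScore_some, flScore_none] at h
      omega
    have hsum : ∑ v, indeg S v = ∑ v, outdeg S v := by
      rw [sum_indeg, sum_outdeg]
    have hbal : ∀ v, indeg S v = outdeg S v := fun v =>
      (Finset.sum_eq_sum_iff_of_le (fun i _ => hle i)).1 hsum v (Finset.mem_univ v)
    obtain ⟨F, h1, h2, h3⟩ := decomp k S hSk hloop hbal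
    refine ⟨F, fun c hc => ?_, h2, h3⟩
    obtain ⟨hc1, hc2, hc3⟩ := h1 c hc
    exact ⟨hc1, hc2, fun a ha => hSA (hc3 a ha)⟩
  · rintro ⟨F, hFcyc, hFpw, hFsum⟩
    set L : List (V × V) := (F.map cycArcs).flatten with hL
    have hLnd : L.Nodup := by
      rw [hL, List.nodup_flatten]
      constructor
      · intro l hl
        obtain ⟨c, hc, rfl⟩ := List.mem_map.1 hl
        exact nodup_cycArcs (hFcyc c hc).2.1
      · exact List.Pairwise.map cycArcs (fun c d h a ha => h a ha) hFpw
    set S : Finset (V × V) := L.toFinset with hS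
    have hmemL : ∀ a ∈ L, a ∈ A := by
      intro a ha
      rw [hL, List.mem_flatten] at ha
      obtain ⟨l, hl, hal⟩ := ha
      obtain ⟨c, hc, rfl⟩ := List.mem_map.1 hl
      exact (hFcyc c hc).2.2 a hal
    have hSA : S ⊆ A := by
      intro a ha
      rw [hS, List.mem_toFinset] at ha
      exact hmemL a ha
    have hScard : S.card = k := by
      rw [hS, List.toFinset_card_of_nodup hLnd, hL, List.length_flatten, List.map_map]
      rw [show (List.length ∘ cycArcs : List V → ℕ) = List.length from
        funext (fun c => length_cycArcs c)]
      exact hFsum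
    have hbal : ∀ v, indeg S v = outdeg S v := by
      intro v
      rw [indeg, outdeg, hS,
        toFinset_filter_card hLnd (fun a => a.2 = v),
        toFinset_filter_card hLnd (fun a => a.1 = v),
        hL, List.countP_flatten, List.countP_flatten, List.map_map, List.map_map]
      congr 1
      apply List.map_congr_left
      intro c _
      exact countP_cycArcs c v
    refine ⟨S, hSA, hScard, ?_⟩
    intro d
    rw [flScore_none]
    cases d with
    | none => rw [flScore_none]
    | some v =>
      rw [flScore_some, hbal v]
      simp
end

section
/- Let C be a finite candidate set with p ∈ C, let V and W be finite multisets of First-Last votes on C (the registered and unregistered voters), and let k ∈ ℕ. Suppose the number of votes in W whose first component is p is at least k. Then there exists a submultiset W′ of W with |W′| = k such that p is a First-Last winner of V + W′, if and only if there exists such a submultiset W′ in which every vote has first component p. -/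
/-! Trading each vote of `W'` that does not rank `p` first for an unused vote of `W` that does
cannot hurt `p`: the dropped vote gave `p` at most `0` and any rival `d` at least `-1`, while the
new vote gives `p` exactly `1` and `d` at most `0`. The hypothesis on `k` guarantees that enough
unused votes ranking `p` first are left in `W`. -/

namespace Multiset

theorem exists_le_card_eq {α : Type*} {s : Multiset α} {n : ℕ} (h : n ≤ card s) :
    ∃ t ≤ s, card t = n := by
  have hne : powersetCard n s ≠ 0 := by
    rw [← card_pos, card_powersetCard]
    exact Nat.choose_pos h
  obtain ⟨t, ht⟩ := exists_mem_of_ne_zero hne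
  exact ⟨t, mem_powersetCard.1 ht⟩

theorem exists_le_sub_forall_card_eq_card_filter_not {α : Type*} [DecidableEq α]
    (P : α → Prop) [DecidablePred P] {s t : Multiset α} (hts : t ≤ s)
    (hcard : card t ≤ card (s.filter P)) :
    ∃ u ≤ s - t, (∀ a ∈ u, P a) ∧ card u = card (t.filter (fun a => ¬ P a)) := by
  have hsplit : card (t.filter P) + card (t.filter (fun a => ¬ P a)) = card t := by
    rw [← card_add, filter_add_not]
  have hfilter : t.filter P ≤ s.filter P := filter_le_filter P hts
  have hroom : card (t.filter (fun a => ¬ P a)) ≤ card ((s - t).filter P) := by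
    rw [filter_sub, card_sub hfilter]
    omega
  obtain ⟨u, hu, hcard_u⟩ := exists_le_card_eq hroom
  exact ⟨u, hu.trans (filter_le P _), fun a ha => (mem_filter.1 (mem_of_le hu ha)).2, hcard_u⟩

end Multiset

section FirstLast

variable {C : Type} [DecidableEq C]

theorem flScore_add (X Y : Multiset (C × C)) (c : C) :
    flScore (X + Y) c = flScore X c + flScore Y c := by
  simp only [flScore, Multiset.filter_add, Multiset.card_add, Nat.cast_add]
  ring

theorem flScore_le_card_filter_fst (X : Multiset (C × C)) (c : C) :
    flScore X c ≤ Multiset.card (X.filter (fun v => v.1 = c)) := by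
  simp only [flScore]
  omega

theorem neg_card_le_flScore (X : Multiset (C × C)) (c : C) :
    -(Multiset.card X : ℤ) ≤ flScore X c := by
  have := Multiset.card_le_card (Multiset.filter_le (fun v => v.2 = c) X)
  simp only [flScore]
  omega

theorem flScore_eq_card_of_forall_fst_eq {X : Multiset (C × C)} {p : C}
    (hfst : ∀ v ∈ X, v.1 = p) (hX : ∀ v ∈ X, v.1 ≠ v.2) :
    flScore X p = Multiset.card X := by
  have hlast : X.filter (fun v => v.2 = p) = 0 :=
    Multiset.filter_eq_nil.2 fun v hv h => hX v hv ((hfst v hv).trans h.symm)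
  simp [flScore, Multiset.filter_eq_self.2 hfst, hlast]

theorem flWinner_add_of_flWinner_add [Fintype C] {Y B E : Multiset (C × C)} {p : C}
    (hwin : flWinner (Y + B) p) (hB : ∀ v ∈ B, v.1 ≠ p)
    (hE : ∀ v ∈ E, v.1 = p) (hE' : ∀ v ∈ E, v.1 ≠ v.2)
    (hcard : Multiset.card B ≤ Multiset.card E) :
    flWinner (Y + E) p := by
  intro d
  rcases eq_or_ne d p with rfl | hd
  · exact le_rfl
  have hEd : flScore E d ≤ 0 := by
    have hnone : E.filter (fun v => v.1 = d) = 0 :=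
      Multiset.filter_eq_nil.2 fun v hv h => hd (h.symm.trans (hE v hv))
    simpa [hnone] using flScore_le_card_filter_fst E d
  have hBp : flScore B p ≤ 0 := by
    simpa [Multiset.filter_eq_nil.2 hB] using flScore_le_card_filter_fst B p
  have hwin_d := hwin d
  rw [flScore_add, flScore_add] at hwin_d
  rw [flScore_add, flScore_add, flScore_eq_card_of_forall_fst_eq hE hE']
  have hBd := neg_card_le_flScore B d
  have hcard' : (Multiset.card B : ℤ) ≤ Multiset.card E := by exact_mod_cast hcard
  linarith

end FirstLast

theorem stmt11_general {C : Type} [Fintype C] [DecidableEq C] (p : C)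
    (V W : Multiset (C × C))
    (hW : ∀ v ∈ W, v.1 ≠ v.2)
    (k : ℕ) (hk : k ≤ Multiset.card (W.filter (fun v => v.1 = p))) :
    (∃ W' ≤ W, Multiset.card W' = k ∧ flWinner (V + W') p)
    ↔ (∃ W' ≤ W, Multiset.card W' = k ∧ (∀ v ∈ W', v.1 = p) ∧ flWinner (V + W') p) := by
  refine ⟨?_, fun ⟨W', hle, hcard, _, hwin⟩ => ⟨W', hle, hcard, hwin⟩⟩
  rintro ⟨W', hle, rfl, hwin⟩
  set A := W'.filter (fun v => v.1 = p)
  set B := W'.filter (fun v => ¬ v.1 = p)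
  have hAB : A + B = W' := Multiset.filter_add_not _ _
  obtain ⟨E, hEW, hEp, hcardE⟩ :=
    Multiset.exists_le_sub_forall_card_eq_card_filter_not (fun v => v.1 = p) hle hk
  have hAE : A + E ≤ W :=
    calc A + E ≤ W' + (W - W') := add_le_add (Multiset.filter_le _ _) hEW
      _ = W := add_tsub_cancel_of_le hle
  refine ⟨A + E, hAE, ?_, ?_, ?_⟩
  · rw [Multiset.card_add, hcardE, ← Multiset.card_add, hAB]
  · simp only [Multiset.mem_add]
    rintro v (hv | hv)
    exacts [(Multiset.mem_filter.1 hv).2, hEp v hv]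
  · rw [← hAB, ← add_assoc] at hwin
    rw [← add_assoc]
    exact flWinner_add_of_flWinner_add hwin (fun v hv => (Multiset.mem_filter.1 hv).2) hEp
      (fun v hv => hW v (Multiset.mem_of_le (hAE.trans' le_add_self) hv)) hcardE.ge

/-- if at least `k` unregistered votes rank `p` first, then `p` can be made a
winner by adding exactly `k` unregistered votes iff it can be done adding only votes
that rank `p` first. -/
theorem stmt11 {C : Type} [Fintype C] [DecidableEq C] (p : C)
    (V W : Multiset (C × C))
    (hV : ∀ v ∈ V, v.1 ≠ v.2) (hW : ∀ v ∈ W, v.1 ≠ v.2)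
    (k : ℕ) (hk : k ≤ Multiset.card (W.filter (fun v => v.1 = p))) :
    (∃ W' ≤ W, Multiset.card W' = k ∧ flWinner (V + W') p)
    ↔ (∃ W' ≤ W, Multiset.card W' = k ∧ (∀ v ∈ W', v.1 = p) ∧ flWinner (V + W') p) :=
  stmt11_general p V W hW k hk
end
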